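/- arXiv:2501.00483 — 6 statements merged into one kernel-verified Lean document; each statement's English description precedes it below -/
import Mathlib

section
/- For every formula α of modal logic, the sequent α ⊢ α is provable in the cut-free fragment of the global twist sequent calculus gTS4. -/
inductive Fml : Type
  | var : ℕ → Fml
  | and : Fml → Fml → Fml
  | or  : Fml → Fml → Fml
  | imp : Fml → Fml → Fml
  | neg : Fml → Fml
  | box : Fml → Fml
  | dia : Fml → Fml
  deriving DecidableEq

open Fml

abbrev Ctx := Finset Fml

/-- □Γ -/
def boxS (Γ : Ctx) : Ctx := Γ.image Fml.box
/-- ◇Γ -/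
def diaS (Γ : Ctx) : Ctx := Γ.image Fml.dia
/-- ¬□Γ -/
def nboxS (Γ : Ctx) : Ctx := Γ.image (fun g => Fml.neg (Fml.box g))
/-- ¬◇Γ -/
def ndiaS (Γ : Ctx) : Ctx := Γ.image (fun g => Fml.neg (Fml.dia g))

/-- The global twist sequent calculus gTS4; the Boolean index is `true` iff cut is allowed. -/
inductive gTS4 : Bool → Ctx → Ctx → Prop
  | initV (c : Bool) (p : ℕ) : gTS4 c {var p} {var p}
  | initNV (c : Bool) (p : ℕ) : gTS4 c {neg (var p)} {neg (var p)}
  | initL (c : Bool) (p : ℕ) : gTS4 c {neg (var p), var p} ∅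
  | initR (c : Bool) (p : ℕ) : gTS4 c ∅ {neg (var p), var p}
  | cut (Γ Δ : Ctx) (α : Fml) :
      gTS4 true Γ {α} → gTS4 true (insert α Γ) Δ → gTS4 true Γ Δ
  | weL (c Γ Δ α) : gTS4 c Γ Δ → gTS4 c (insert α Γ) Δ
  | weR (c Γ Δ α) : gTS4 c Γ Δ → gTS4 c Γ (insert α Δ)
  | andL (c Γ Δ α β) : gTS4 c (insert α (insert β Γ)) Δ → gTS4 c (insert (α.and β) Γ) Δ
  | andR (c Γ Δ α β) : gTS4 c Γ (insert α Δ) → gTS4 c Γ (insert β Δ) →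
      gTS4 c Γ (insert (α.and β) Δ)
  | orL (c Γ Δ α β) : gTS4 c (insert α Γ) Δ → gTS4 c (insert β Γ) Δ →
      gTS4 c (insert (α.or β) Γ) Δ
  | orR (c Γ Δ α β) : gTS4 c Γ (insert α (insert β Δ)) → gTS4 c Γ (insert (α.or β) Δ)
  | impL (c Γ Δ α β) : gTS4 c Γ (insert α Δ) → gTS4 c (insert β Γ) Δ →
      gTS4 c (insert (α.imp β) Γ) Δ
  | impR (c Γ Δ α β) : gTS4 c (insert α Γ) (insert β Δ) → gTS4 c Γ (insert (α.imp β) Δ)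
  | boxL (c Γ Δ α) : gTS4 c (insert α Γ) Δ → gTS4 c (insert α.box Γ) Δ
  | boxRT (c Γ₁ Γ₂ Δ₁ Δ₂ α) :
      gTS4 c (boxS Γ₁ ∪ boxS Δ₂) (insert α (diaS Δ₁ ∪ diaS Γ₂)) →
      gTS4 c (boxS Γ₁ ∪ ndiaS Γ₂) (insert α.box (diaS Δ₁ ∪ nboxS Δ₂))
  | diaLT (c Γ₁ Γ₂ Δ₁ Δ₂ α) :
      gTS4 c (insert α (boxS Γ₁ ∪ boxS Δ₂)) (diaS Δ₁ ∪ diaS Γ₂) →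
      gTS4 c (insert α.dia (boxS Γ₁ ∪ ndiaS Γ₂)) (diaS Δ₁ ∪ nboxS Δ₂)
  | diaR (c Γ Δ α) : gTS4 c Γ (insert α Δ) → gTS4 c Γ (insert α.dia Δ)
  | nnL (c Γ Δ α) : gTS4 c (insert α Γ) Δ → gTS4 c (insert α.neg.neg Γ) Δ
  | nnR (c Γ Δ α) : gTS4 c Γ (insert α Δ) → gTS4 c Γ (insert α.neg.neg Δ)
  | nandL (c Γ Δ α β) : gTS4 c Γ (insert α Δ) → gTS4 c Γ (insert β Δ) →
      gTS4 c (insert (α.and β).neg Γ) Δ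
  | nandR (c Γ Δ α β) : gTS4 c (insert α (insert β Γ)) Δ → gTS4 c Γ (insert (α.and β).neg Δ)
  | norL (c Γ Δ α β) : gTS4 c Γ (insert α (insert β Δ)) → gTS4 c (insert (α.or β).neg Γ) Δ
  | norR (c Γ Δ α β) : gTS4 c (insert α Γ) Δ → gTS4 c (insert β Γ) Δ →
      gTS4 c Γ (insert (α.or β).neg Δ)
  | nimpL (c Γ Δ α β) : gTS4 c (insert α Γ) (insert β Δ) → gTS4 c (insert (α.imp β).neg Γ) Δ
  | nimpR (c Γ Δ α β) : gTS4 c Γ (insert α Δ) → gTS4 c (insert β Γ) Δ →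
      gTS4 c Γ (insert (α.imp β).neg Δ)
  | nboxLT (c Γ₁ Γ₂ Δ₁ Δ₂ α) :
      gTS4 c (boxS Γ₁ ∪ boxS Δ₂) (insert α (diaS Δ₁ ∪ diaS Γ₂)) →
      gTS4 c (insert α.box.neg (boxS Γ₁ ∪ ndiaS Γ₂)) (diaS Δ₁ ∪ nboxS Δ₂)
  | nboxR (c Γ Δ α) : gTS4 c (insert α Γ) Δ → gTS4 c Γ (insert α.box.neg Δ)
  | ndiaL (c Γ Δ α) : gTS4 c Γ (insert α Δ) → gTS4 c (insert α.dia.neg Γ) Δ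
  | ndiaRT (c Γ₁ Γ₂ Δ₁ Δ₂ α) :
      gTS4 c (insert α (boxS Γ₁ ∪ boxS Δ₂)) (diaS Δ₁ ∪ diaS Γ₂) →
      gTS4 c (boxS Γ₁ ∪ ndiaS Γ₂) (insert α.dia.neg (diaS Δ₁ ∪ nboxS Δ₂))


lemma gcast {c : Bool} {Γ Γ' Δ Δ' : Ctx} (hΓ : Γ = Γ') (hΔ : Δ = Δ')
    (h : gTS4 c Γ Δ) : gTS4 c Γ' Δ' := hΓ ▸ hΔ ▸ h

lemma both (α : Fml) : gTS4 false {α} {α} ∧ gTS4 false {α.neg} {α.neg} := by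
  induction α with
  | var p => exact ⟨.initV _ _, .initNV _ _⟩
  | and a b iha ihb =>
    constructor
    · show gTS4 false {a.and b} (insert (a.and b) ∅)
      apply gTS4.andR
      · show gTS4 false (insert (a.and b) ∅) (insert a ∅)
        apply gTS4.andL
        exact gcast (by ext x; simp <;> tauto) rfl (gTS4.weL _ _ _ b iha.1)
      · show gTS4 false (insert (a.and b) ∅) (insert b ∅)
        apply gTS4.andL
        exact gcast (by ext x; simp <;> tauto) rfl (gTS4.weL _ _ _ a ihb.1)
    · show gTS4 false (insert (a.and b).neg ∅) {(a.and b).neg}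
      apply gTS4.nandL
      · exact gcast rfl (by ext x; simp <;> tauto)
          (gTS4.nandR false ∅ {a} a b
            (gcast (by ext x; simp <;> tauto) rfl (gTS4.weL _ _ _ b iha.1)))
      · exact gcast rfl (by ext x; simp <;> tauto)
          (gTS4.nandR false ∅ {b} a b
            (gcast (by ext x; simp <;> tauto) rfl (gTS4.weL _ _ _ a ihb.1)))
  | or a b iha ihb =>
    constructor
    · show gTS4 false (insert (a.or b) ∅) {a.or b}
      apply gTS4.orL
      · show gTS4 false (insert a ∅) (insert (a.or b) ∅)
        apply gTS4.orR
        exact gcast rfl (by ext x; simp <;> tauto) (gTS4.weR _ _ _ b iha.1)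
      · show gTS4 false (insert b ∅) (insert (a.or b) ∅)
        apply gTS4.orR
        exact gcast rfl (by ext x; simp <;> tauto) (gTS4.weR _ _ _ a ihb.1)
    · show gTS4 false (insert (a.or b).neg ∅) {(a.or b).neg}
      apply gTS4.norL
      exact gcast rfl (by ext x; simp <;> tauto)
        (gTS4.norR false ∅ {a, b} a b
          (gcast rfl (by ext x; simp <;> tauto) (gTS4.weR _ _ _ b iha.1))
          (gcast rfl (by ext x; simp <;> tauto) (gTS4.weR _ _ _ a ihb.1)))
  | imp a b iha ihb =>
    constructor
    · show gTS4 false {a.imp b} (insert (a.imp b) ∅)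
      apply gTS4.impR
      exact gcast (by ext x; simp <;> tauto) rfl
        (gTS4.impL false {a} {b} a b
          (gcast rfl (by ext x; simp <;> tauto) (gTS4.weR _ _ _ b iha.1))
          (gcast (by ext x; simp <;> tauto) rfl (gTS4.weL _ _ _ a ihb.1)))
    · show gTS4 false (insert (a.imp b).neg ∅) {(a.imp b).neg}
      apply gTS4.nimpL
      exact gcast rfl (by ext x; simp <;> tauto)
        (gTS4.nimpR false {a} {b} a b
          (gcast rfl (by ext x; simp <;> tauto) (gTS4.weR _ _ _ b iha.1))
          (gcast (by ext x; simp <;> tauto) rfl (gTS4.weL _ _ _ a ihb.1)))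
  | neg a iha =>
    refine ⟨iha.2, ?_⟩
    show gTS4 false (insert a.neg.neg ∅) {a.neg.neg}
    apply gTS4.nnL
    show gTS4 false (insert a ∅) (insert a.neg.neg ∅)
    apply gTS4.nnR
    exact iha.1
  | box a iha =>
    constructor
    · exact gcast (by ext x; simp [boxS, diaS, nboxS, ndiaS])
        (by ext x; simp [boxS, diaS, nboxS, ndiaS])
        (gTS4.boxRT false {a} ∅ ∅ ∅ a
          (gcast (by ext x; simp [boxS, diaS, nboxS, ndiaS])
            (by ext x; simp [boxS, diaS, nboxS, ndiaS])
            (gTS4.boxL false ∅ {a} a iha.1)))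
    · exact gcast (by ext x; simp [boxS, diaS, nboxS, ndiaS])
        (by ext x; simp [boxS, diaS, nboxS, ndiaS])
        (gTS4.nboxLT false ∅ ∅ ∅ {a} a
          (gcast (by ext x; simp [boxS, diaS, nboxS, ndiaS])
            (by ext x; simp [boxS, diaS, nboxS, ndiaS])
            (gTS4.boxL false ∅ {a} a iha.1)))
  | dia a iha =>
    constructor
    · exact gcast (by ext x; simp [boxS, diaS, nboxS, ndiaS])
        (by ext x; simp [boxS, diaS, nboxS, ndiaS])
        (gTS4.diaLT false ∅ ∅ {a} ∅ a
          (gcast (by ext x; simp [boxS, diaS, nboxS, ndiaS])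
            (by ext x; simp [boxS, diaS, nboxS, ndiaS])
            (gTS4.diaR false {a} ∅ a iha.1)))
    · exact gcast (by ext x; simp [boxS, diaS, nboxS, ndiaS])
        (by ext x; simp [boxS, diaS, nboxS, ndiaS])
        (gTS4.ndiaRT false ∅ {a} ∅ ∅ a
          (gcast (by ext x; simp [boxS, diaS, nboxS, ndiaS])
            (by ext x; simp [boxS, diaS, nboxS, ndiaS])
            (gTS4.diaR false {a} ∅ a iha.1)))

/-- for every formula α, the sequent α ⊢ α is provable in cut-free gTS4. -/
theorem stmt2 (α : Fml) : gTS4 false {α} {α} := (both α).1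
end

section
/- The negation-left rule is admissible in cut-free lTS4: if the sequent Γ ⊢ Δ, α is provable in cut-free lTS4, then the sequent ¬α, Γ ⊢ Δ is provable in cut-free lTS4. -/
open Fml

/-- The twist sequent calculus lTS4; the Boolean index is `true` iff the cut rule is allowed.
    `lTS4 false` is the cut-free fragment. -/
inductive lTS4 : Bool → Ctx → Ctx → Prop
  | initV (c : Bool) (p : ℕ) : lTS4 c {var p} {var p}
  | initNV (c : Bool) (p : ℕ) : lTS4 c {neg (var p)} {neg (var p)}
  | initL (c : Bool) (p : ℕ) : lTS4 c {neg (var p), var p} ∅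
  | initR (c : Bool) (p : ℕ) : lTS4 c ∅ {neg (var p), var p}
  | cut (Γ Δ : Ctx) (α : Fml) :
      lTS4 true Γ {α} → lTS4 true (insert α Γ) Δ → lTS4 true Γ Δ
  | weL (c Γ Δ α) : lTS4 c Γ Δ → lTS4 c (insert α Γ) Δ
  | weR (c Γ Δ α) : lTS4 c Γ Δ → lTS4 c Γ (insert α Δ)
  | andL (c Γ Δ α β) : lTS4 c (insert α (insert β Γ)) Δ → lTS4 c (insert (α.and β) Γ) Δ
  | andR (c Γ Δ α β) : lTS4 c Γ (insert α Δ) → lTS4 c Γ (insert β Δ) →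
      lTS4 c Γ (insert (α.and β) Δ)
  | orL (c Γ Δ α β) : lTS4 c (insert α Γ) Δ → lTS4 c (insert β Γ) Δ →
      lTS4 c (insert (α.or β) Γ) Δ
  | orR (c Γ Δ α β) : lTS4 c Γ (insert α (insert β Δ)) → lTS4 c Γ (insert (α.or β) Δ)
  | impL (c Γ Δ α β) : lTS4 c Γ (insert α Δ) → lTS4 c (insert β Γ) Δ →
      lTS4 c (insert (α.imp β) Γ) Δ
  | impR (c Γ Δ α β) : lTS4 c (insert α Γ) (insert β Δ) → lTS4 c Γ (insert (α.imp β) Δ)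
  | boxL (c Γ Δ α) : lTS4 c (insert α Γ) Δ → lTS4 c (insert α.box Γ) Δ
  | boxR (c Γ₁ Γ₂ Δ₁ Δ₂ α) :
      lTS4 c (boxS Γ₁ ∪ ndiaS Γ₂) (insert α (diaS Δ₁ ∪ nboxS Δ₂)) →
      lTS4 c (boxS Γ₁ ∪ ndiaS Γ₂) (insert α.box (diaS Δ₁ ∪ nboxS Δ₂))
  | diaL (c Γ₁ Γ₂ Δ₁ Δ₂ α) :
      lTS4 c (insert α (boxS Γ₁ ∪ ndiaS Γ₂)) (diaS Δ₁ ∪ nboxS Δ₂) →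
      lTS4 c (insert α.dia (boxS Γ₁ ∪ ndiaS Γ₂)) (diaS Δ₁ ∪ nboxS Δ₂)
  | diaR (c Γ Δ α) : lTS4 c Γ (insert α Δ) → lTS4 c Γ (insert α.dia Δ)
  | nnL (c Γ Δ α) : lTS4 c (insert α Γ) Δ → lTS4 c (insert α.neg.neg Γ) Δ
  | nnR (c Γ Δ α) : lTS4 c Γ (insert α Δ) → lTS4 c Γ (insert α.neg.neg Δ)
  | nandL (c Γ Δ α β) : lTS4 c Γ (insert α Δ) → lTS4 c Γ (insert β Δ) →
      lTS4 c (insert (α.and β).neg Γ) Δ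
  | nandR (c Γ Δ α β) : lTS4 c (insert α (insert β Γ)) Δ → lTS4 c Γ (insert (α.and β).neg Δ)
  | norL (c Γ Δ α β) : lTS4 c Γ (insert α (insert β Δ)) → lTS4 c (insert (α.or β).neg Γ) Δ
  | norR (c Γ Δ α β) : lTS4 c (insert α Γ) Δ → lTS4 c (insert β Γ) Δ →
      lTS4 c Γ (insert (α.or β).neg Δ)
  | nimpL (c Γ Δ α β) : lTS4 c (insert α Γ) (insert β Δ) → lTS4 c (insert (α.imp β).neg Γ) Δ
  | nimpR (c Γ Δ α β) : lTS4 c Γ (insert α Δ) → lTS4 c (insert β Γ) Δ →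
      lTS4 c Γ (insert (α.imp β).neg Δ)
  | nboxL (c Γ₁ Γ₂ Δ₁ Δ₂ α) :
      lTS4 c (boxS Γ₁ ∪ ndiaS Γ₂) (insert α (diaS Δ₁ ∪ nboxS Δ₂)) →
      lTS4 c (insert α.box.neg (boxS Γ₁ ∪ ndiaS Γ₂)) (diaS Δ₁ ∪ nboxS Δ₂)
  | nboxR (c Γ Δ α) : lTS4 c (insert α Γ) Δ → lTS4 c Γ (insert α.box.neg Δ)
  | ndiaL (c Γ Δ α) : lTS4 c Γ (insert α Δ) → lTS4 c (insert α.dia.neg Γ) Δ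
  | ndiaR (c Γ₁ Γ₂ Δ₁ Δ₂ α) :
      lTS4 c (insert α (boxS Γ₁ ∪ ndiaS Γ₂)) (diaS Δ₁ ∪ nboxS Δ₂) →
      lTS4 c (boxS Γ₁ ∪ ndiaS Γ₂) (insert α.dia.neg (diaS Δ₁ ∪ nboxS Δ₂))

/-! Rather than moving the single formula α, prove that a derivation of Γ ⊢ Δ can be replayed in
every sequent Γ' ⊢ Δ' that contains Γ on the left and in which each φ ∈ Δ either stays on the right
or appears on the left as `φ.negate` (φ with its outer negation stripped, or ¬φ). Moving all such
formulas at once is what makes contraction, built into the set-based sequents, harmless. Each right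
rule for φ has a twin left rule for ¬φ with the same premises, and each right rule for ¬φ a twin
left rule for φ; for ¬¬φ the rule (¬¬left) bridges `φ.negate` and ¬φ. Stripping a negation instead
of adding ¬¬ keeps the modal contexts □Γ₁, ¬◇Γ₂ and ◇Δ₁, ¬□Δ₂ in the shape the modal rules need. -/

def Fml.negate : Fml → Fml
  | .neg φ => φ
  | φ => φ.neg

def Embeds (Γ Δ Γ' Δ' : Ctx) : Prop :=
  Γ ⊆ Γ' ∧ ∀ φ ∈ Δ, φ ∈ Δ' ∨ φ.negate ∈ Γ'

namespace Embeds

variable {Γ Δ Γ' Δ' : Ctx}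

theorem refl (Γ Δ : Ctx) : Embeds Γ Δ Γ Δ :=
  ⟨subset_rfl, fun _ hφ => .inl hφ⟩

theorem insert_left_iff {ψ : Fml} :
    Embeds (insert ψ Γ) Δ Γ' Δ' ↔ ψ ∈ Γ' ∧ Embeds Γ Δ Γ' Δ' := by
  simp only [Embeds, Finset.insert_subset_iff, and_assoc]

theorem insert_right_iff {ψ : Fml} :
    Embeds Γ (insert ψ Δ) Γ' Δ' ↔ (ψ ∈ Δ' ∨ ψ.negate ∈ Γ') ∧ Embeds Γ Δ Γ' Δ' := by
  simp only [Embeds, Finset.forall_mem_insert]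
  tauto

theorem insert_left (e : Embeds Γ Δ Γ' Δ') (ψ : Fml) :
    Embeds (insert ψ Γ) Δ (insert ψ Γ') Δ' :=
  ⟨Finset.insert_subset_insert ψ e.1, fun φ hφ =>
    (e.2 φ hφ).imp id (Finset.mem_insert_of_mem ·)⟩

theorem insert_right (e : Embeds Γ Δ Γ' Δ') (ψ : Fml) :
    Embeds Γ (insert ψ Δ) Γ' (insert ψ Δ') := by
  refine ⟨e.1, Finset.forall_mem_insert .. |>.2 ⟨.inl (Finset.mem_insert_self ψ Δ'), ?_⟩⟩
  exact fun φ hφ => (e.2 φ hφ).imp (Finset.mem_insert_of_mem ·) id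

theorem insert_negate (e : Embeds Γ Δ Γ' Δ') (ψ : Fml) :
    Embeds Γ (insert ψ Δ) (insert ψ.negate Γ') Δ' := by
  refine ⟨e.1.trans (Finset.subset_insert _ _),
    Finset.forall_mem_insert .. |>.2 ⟨.inr (Finset.mem_insert_self _ _), ?_⟩⟩
  exact fun φ hφ => (e.2 φ hφ).imp id (Finset.mem_insert_of_mem ·)

/-- Moving formulas out of a modal right context keeps both contexts modal: `◇δ` moves as `¬◇δ`
and `¬□δ` as `□δ`. -/
theorem exists_modal {Γ₁ Γ₂ Δ₁ Δ₂ : Ctx}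
    (e : Embeds (boxS Γ₁ ∪ ndiaS Γ₂) (diaS Δ₁ ∪ nboxS Δ₂) Γ' Δ') :
    ∃ Γ₁' Γ₂' Δ₁' Δ₂' : Ctx,
      Embeds (boxS Γ₁ ∪ ndiaS Γ₂) (diaS Δ₁ ∪ nboxS Δ₂) (boxS Γ₁' ∪ ndiaS Γ₂')
        (diaS Δ₁' ∪ nboxS Δ₂') ∧
      boxS Γ₁' ∪ ndiaS Γ₂' ⊆ Γ' ∧ diaS Δ₁' ∪ nboxS Δ₂' ⊆ Δ' := by
  refine ⟨Γ₁ ∪ Δ₂.filter (·.box ∈ Γ'), Γ₂ ∪ Δ₁.filter (·.dia.neg ∈ Γ'),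
    Δ₁.filter (·.dia ∈ Δ'), Δ₂.filter (·.box.neg ∈ Δ'), ⟨?_, ?_⟩, ?_, ?_⟩
  · intro φ
    simp only [boxS, ndiaS, Finset.mem_union, Finset.mem_image, Finset.mem_filter]
    grind
  · have h := e.2
    simp only [diaS, nboxS, boxS, ndiaS, Finset.mem_union, Finset.mem_image,
      Finset.mem_filter] at h ⊢
    grind [Fml.negate]
  · have h := e.1
    simp only [Finset.subset_iff, boxS, ndiaS, Finset.mem_union, Finset.mem_image,
      Finset.mem_filter] at h ⊢
    grind
  · simp only [Finset.subset_iff, diaS, nboxS, Finset.mem_union, Finset.mem_image,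
      Finset.mem_filter]
    grind

end Embeds

namespace lTS4

variable {c : Bool} {Γ Δ Γ' Δ' : Ctx}

theorem union_left (h : lTS4 c Γ Δ) (A : Ctx) : lTS4 c (A ∪ Γ) Δ := by
  induction A using Finset.induction_on with
  | empty => simpa using h
  | insert ψ _ _ ih => rw [Finset.insert_union]; exact weL _ _ _ ψ ih

theorem union_right (h : lTS4 c Γ Δ) (A : Ctx) : lTS4 c Γ (A ∪ Δ) := by
  induction A using Finset.induction_on with
  | empty => simpa using h
  | insert ψ _ _ ih => rw [Finset.insert_union]; exact weR _ _ _ ψ ih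

theorem mono (h : lTS4 c Γ Δ) (hΓ : Γ ⊆ Γ') (hΔ : Δ ⊆ Δ') : lTS4 c Γ' Δ' := by
  rw [← Finset.sdiff_union_of_subset hΓ, ← Finset.sdiff_union_of_subset hΔ]
  exact ((h.union_left _).union_right _)

theorem absorb_left {ψ : Fml} (hψ : ψ ∈ Γ) (h : lTS4 c (insert ψ Γ) Δ) : lTS4 c Γ Δ :=
  Finset.insert_eq_of_mem hψ ▸ h

theorem absorb_right {ψ : Fml} (hψ : ψ ∈ Δ) (h : lTS4 c Γ (insert ψ Δ)) : lTS4 c Γ Δ :=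
  Finset.insert_eq_of_mem hψ ▸ h

theorem neg_left_of_negate_left {γ : Fml} (h : lTS4 c (insert γ.negate Γ) Δ) :
    lTS4 c (insert γ.neg Γ) Δ := by
  cases γ with
  | neg φ => exact nnL _ _ _ _ h
  | _ => exact h

theorem of_embeds (h : lTS4 c Γ Δ) (e : Embeds Γ Δ Γ' Δ') : lTS4 c Γ' Δ' := by
  induction h generalizing Γ' Δ' with
  | initV c p =>
    rcases e.2 _ (Finset.mem_singleton_self _) with hp | hp
    · exact (initV c p).mono e.1 (Finset.singleton_subset_iff.2 hp)
    · exact (initL c p).mono (Finset.insert_subset hp e.1) (Finset.empty_subset _)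
  | initNV c p =>
    rcases e.2 _ (Finset.mem_singleton_self _) with hp | hp
    · exact (initNV c p).mono e.1 (Finset.singleton_subset_iff.2 hp)
    · exact (initL c p).mono (Finset.insert_subset (e.1 (Finset.mem_singleton_self _))
        (Finset.singleton_subset_iff.2 hp)) (Finset.empty_subset _)
  | initL c p => exact (initL c p).mono e.1 (Finset.empty_subset _)
  | initR c p =>
    rcases e.2 _ (Finset.mem_insert_self _ _) with hn | hn <;>
    rcases e.2 _ (Finset.mem_insert_of_mem (Finset.mem_singleton_self _)) with hp | hp
    · exact (initR c p).mono (Finset.empty_subset _)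
        (Finset.insert_subset hn (Finset.singleton_subset_iff.2 hp))
    · exact (initNV c p).mono (Finset.singleton_subset_iff.2 hp) (Finset.singleton_subset_iff.2 hn)
    · exact (initV c p).mono (Finset.singleton_subset_iff.2 hn) (Finset.singleton_subset_iff.2 hp)
    · exact (initL c p).mono (Finset.insert_subset hp (Finset.singleton_subset_iff.2 hn))
        (Finset.empty_subset _)
  | cut Γ Δ α h₁ _ _ ih₂ =>
    exact cut Γ' Δ' α (h₁.mono e.1 subset_rfl) (ih₂ (e.insert_left α))
  | weL c Γ Δ α _ ih => exact ih (Embeds.insert_left_iff.1 e).2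
  | weR c Γ Δ α _ ih => exact ih (Embeds.insert_right_iff.1 e).2
  | andL c Γ Δ α β _ ih =>
    obtain ⟨hψ, e⟩ := Embeds.insert_left_iff.1 e
    exact absorb_left hψ (andL _ _ _ _ _ (ih ((e.insert_left β).insert_left α)))
  | andR c Γ Δ α β _ _ ih₁ ih₂ =>
    obtain ⟨hψ | hψ, e⟩ := Embeds.insert_right_iff.1 e
    · exact absorb_right hψ (andR _ _ _ _ _ (ih₁ (e.insert_right α)) (ih₂ (e.insert_right β)))
    · exact absorb_left hψ (nandL _ _ _ _ _ (ih₁ (e.insert_right α)) (ih₂ (e.insert_right β)))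
  | orL c Γ Δ α β _ _ ih₁ ih₂ =>
    obtain ⟨hψ, e⟩ := Embeds.insert_left_iff.1 e
    exact absorb_left hψ (orL _ _ _ _ _ (ih₁ (e.insert_left α)) (ih₂ (e.insert_left β)))
  | orR c Γ Δ α β _ ih =>
    obtain ⟨hψ | hψ, e⟩ := Embeds.insert_right_iff.1 e
    · exact absorb_right hψ (orR _ _ _ _ _ (ih ((e.insert_right β).insert_right α)))
    · exact absorb_left hψ (norL _ _ _ _ _ (ih ((e.insert_right β).insert_right α)))
  | impL c Γ Δ α β _ _ ih₁ ih₂ =>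
    obtain ⟨hψ, e⟩ := Embeds.insert_left_iff.1 e
    exact absorb_left hψ (impL _ _ _ _ _ (ih₁ (e.insert_right α)) (ih₂ (e.insert_left β)))
  | impR c Γ Δ α β _ ih =>
    obtain ⟨hψ | hψ, e⟩ := Embeds.insert_right_iff.1 e
    · exact absorb_right hψ (impR _ _ _ _ _ (ih ((e.insert_right β).insert_left α)))
    · exact absorb_left hψ (nimpL _ _ _ _ _ (ih ((e.insert_right β).insert_left α)))
  | boxL c Γ Δ α _ ih =>
    obtain ⟨hψ, e⟩ := Embeds.insert_left_iff.1 e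
    exact absorb_left hψ (boxL _ _ _ _ (ih (e.insert_left α)))
  | boxR c Γ₁ Γ₂ Δ₁ Δ₂ α _ ih =>
    obtain ⟨hψ | hψ, e⟩ := Embeds.insert_right_iff.1 e
    all_goals
      obtain ⟨Γ₁', Γ₂', Δ₁', Δ₂', e, hΓ, hΔ⟩ := e.exists_modal
      have prem := ih (e.insert_right α)
    · exact (boxR _ _ _ _ _ _ prem).mono hΓ (Finset.insert_subset hψ hΔ)
    · exact (nboxL _ _ _ _ _ _ prem).mono (Finset.insert_subset hψ hΓ) hΔ
  | diaL c Γ₁ Γ₂ Δ₁ Δ₂ α _ ih =>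
    obtain ⟨hψ, e⟩ := Embeds.insert_left_iff.1 e
    obtain ⟨Γ₁', Γ₂', Δ₁', Δ₂', e, hΓ, hΔ⟩ := e.exists_modal
    exact (diaL _ _ _ _ _ _ (ih (e.insert_left α))).mono (Finset.insert_subset hψ hΓ) hΔ
  | diaR c Γ Δ α _ ih =>
    obtain ⟨hψ | hψ, e⟩ := Embeds.insert_right_iff.1 e
    · exact absorb_right hψ (diaR _ _ _ _ (ih (e.insert_right α)))
    · exact absorb_left hψ (ndiaL _ _ _ _ (ih (e.insert_right α)))
  | nnL c Γ Δ α _ ih =>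
    obtain ⟨hψ, e⟩ := Embeds.insert_left_iff.1 e
    exact absorb_left hψ (nnL _ _ _ _ (ih (e.insert_left α)))
  | nnR c Γ Δ α _ ih =>
    obtain ⟨hψ | hψ, e⟩ := Embeds.insert_right_iff.1 e
    · exact absorb_right hψ (nnR _ _ _ _ (ih (e.insert_right α)))
    · exact absorb_left hψ (neg_left_of_negate_left (ih (e.insert_negate α)))
  | nandL c Γ Δ α β _ _ ih₁ ih₂ =>
    obtain ⟨hψ, e⟩ := Embeds.insert_left_iff.1 e
    exact absorb_left hψ (nandL _ _ _ _ _ (ih₁ (e.insert_right α)) (ih₂ (e.insert_right β)))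
  | nandR c Γ Δ α β _ ih =>
    obtain ⟨hψ | hψ, e⟩ := Embeds.insert_right_iff.1 e
    · exact absorb_right hψ (nandR _ _ _ _ _ (ih ((e.insert_left β).insert_left α)))
    · exact absorb_left hψ (andL _ _ _ _ _ (ih ((e.insert_left β).insert_left α)))
  | norL c Γ Δ α β _ ih =>
    obtain ⟨hψ, e⟩ := Embeds.insert_left_iff.1 e
    exact absorb_left hψ (norL _ _ _ _ _ (ih ((e.insert_right β).insert_right α)))
  | norR c Γ Δ α β _ _ ih₁ ih₂ =>
    obtain ⟨hψ | hψ, e⟩ := Embeds.insert_right_iff.1 e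
    · exact absorb_right hψ (norR _ _ _ _ _ (ih₁ (e.insert_left α)) (ih₂ (e.insert_left β)))
    · exact absorb_left hψ (orL _ _ _ _ _ (ih₁ (e.insert_left α)) (ih₂ (e.insert_left β)))
  | nimpL c Γ Δ α β _ ih =>
    obtain ⟨hψ, e⟩ := Embeds.insert_left_iff.1 e
    exact absorb_left hψ (nimpL _ _ _ _ _ (ih ((e.insert_right β).insert_left α)))
  | nimpR c Γ Δ α β _ _ ih₁ ih₂ =>
    obtain ⟨hψ | hψ, e⟩ := Embeds.insert_right_iff.1 e
    · exact absorb_right hψ (nimpR _ _ _ _ _ (ih₁ (e.insert_right α)) (ih₂ (e.insert_left β)))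
    · exact absorb_left hψ (impL _ _ _ _ _ (ih₁ (e.insert_right α)) (ih₂ (e.insert_left β)))
  | nboxL c Γ₁ Γ₂ Δ₁ Δ₂ α _ ih =>
    obtain ⟨hψ, e⟩ := Embeds.insert_left_iff.1 e
    obtain ⟨Γ₁', Γ₂', Δ₁', Δ₂', e, hΓ, hΔ⟩ := e.exists_modal
    exact (nboxL _ _ _ _ _ _ (ih (e.insert_right α))).mono (Finset.insert_subset hψ hΓ) hΔ
  | nboxR c Γ Δ α _ ih =>
    obtain ⟨hψ | hψ, e⟩ := Embeds.insert_right_iff.1 e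
    · exact absorb_right hψ (nboxR _ _ _ _ (ih (e.insert_left α)))
    · exact absorb_left hψ (boxL _ _ _ _ (ih (e.insert_left α)))
  | ndiaL c Γ Δ α _ ih =>
    obtain ⟨hψ, e⟩ := Embeds.insert_left_iff.1 e
    exact absorb_left hψ (ndiaL _ _ _ _ (ih (e.insert_right α)))
  | ndiaR c Γ₁ Γ₂ Δ₁ Δ₂ α _ ih =>
    obtain ⟨hψ | hψ, e⟩ := Embeds.insert_right_iff.1 e
    all_goals
      obtain ⟨Γ₁', Γ₂', Δ₁', Δ₂', e, hΓ, hΔ⟩ := e.exists_modal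
      have prem := ih (e.insert_left α)
    · exact (ndiaR _ _ _ _ _ _ prem).mono hΓ (Finset.insert_subset hψ hΔ)
    · exact (diaL _ _ _ _ _ _ prem).mono (Finset.insert_subset hψ hΓ) hΔ

end lTS4

/-- (¬left) is admissible in cut-free lTS4. -/
theorem stmt3 (Γ Δ : Ctx) (α : Fml) (h : lTS4 false Γ (insert α Δ)) :
    lTS4 false (insert α.neg Γ) Δ :=
  lTS4.neg_left_of_negate_left (h.of_embeds ((Embeds.refl Γ Δ).insert_negate α))
end

section
/- The converse negation-right rule is admissible in cut-free lTS4: if the sequent ¬α, Γ ⊢ Δ is provable in cut-free lTS4, then Γ ⊢ Δ, α is provable in cut-free lTS4. -/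
open Fml

/-! ### Auxiliary finset lemmas -/

private lemma sub1 {a x : Fml} {s : Ctx} : (insert a s).erase x ⊆ insert a (s.erase x) := by
  intro y hy; simp at hy ⊢; tauto

private lemma sub2 {a b x : Fml} {s : Ctx} :
    (insert a (insert b s)).erase x ⊆ insert a (insert b (s.erase x)) := by
  intro y hy; simp at hy ⊢; tauto

private lemma box_inj : Function.Injective Fml.box := fun a b h => by injection h
private lemma ndia_inj : Function.Injective (fun g => Fml.neg (Fml.dia g)) := fun a b h => by
  simpa using h

private lemma erase_box (Γ₁ Γ₂ : Ctx) (g : Fml) :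
    (boxS Γ₁ ∪ ndiaS Γ₂).erase (Fml.box g) = boxS (Γ₁.erase g) ∪ ndiaS Γ₂ := by
  have h : (ndiaS Γ₂).erase (Fml.box g) = ndiaS Γ₂ :=
    Finset.erase_eq_of_notMem (by simp [ndiaS])
  rw [Finset.erase_union_distrib, h, boxS, boxS, ← Finset.image_erase box_inj]

private lemma erase_ndia (Γ₁ Γ₂ : Ctx) (g : Fml) :
    (boxS Γ₁ ∪ ndiaS Γ₂).erase ((Fml.dia g).neg) = boxS Γ₁ ∪ ndiaS (Γ₂.erase g) := by
  have h : (boxS Γ₁).erase ((Fml.dia g).neg) = boxS Γ₁ :=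
    Finset.erase_eq_of_notMem (by simp [boxS])
  rw [Finset.erase_union_distrib, h, ndiaS, ndiaS, ← Finset.image_erase ndia_inj]

private lemma insert_dia_D (g : Fml) (Δ₁ Δ₂ : Ctx) :
    insert (Fml.dia g) (diaS Δ₁ ∪ nboxS Δ₂) = diaS (insert g Δ₁) ∪ nboxS Δ₂ := by
  ext x; simp [diaS, nboxS]

private lemma insert_nbox_D (g : Fml) (Δ₁ Δ₂ : Ctx) :
    insert ((Fml.box g).neg) (diaS Δ₁ ∪ nboxS Δ₂) = diaS Δ₁ ∪ nboxS (insert g Δ₂) := by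
  ext x; simp [diaS, nboxS]

private lemma dia_nmem (a : Fml) (Γ₁ Γ₂ : Ctx) : a.dia ∉ boxS Γ₁ ∪ ndiaS Γ₂ := by
  simp [boxS, ndiaS]

private lemma nbox_nmem (a : Fml) (Γ₁ Γ₂ : Ctx) : a.box.neg ∉ boxS Γ₁ ∪ ndiaS Γ₂ := by
  simp [boxS, ndiaS]

/-! ### Weakening -/

private lemma wkL (c : Bool) (Γ Δ S : Ctx) (h : lTS4 c Γ Δ) : lTS4 c (S ∪ Γ) Δ := by
  induction S using Finset.induction_on with
  | empty => simpa
  | @insert a s _ ih => rw [Finset.insert_union]; exact lTS4.weL _ _ _ _ ih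

private lemma wkR (c : Bool) (Γ Δ S : Ctx) (h : lTS4 c Γ Δ) : lTS4 c Γ (S ∪ Δ) := by
  induction S using Finset.induction_on with
  | empty => simpa
  | @insert a s _ ih => rw [Finset.insert_union]; exact lTS4.weR _ _ _ _ ih

private lemma mono {c : Bool} {Γ Δ Γ' Δ' : Ctx} (h : lTS4 c Γ Δ)
    (h1 : Γ ⊆ Γ') (h2 : Δ ⊆ Δ') : lTS4 c Γ' Δ' := by
  have l1 := wkL c Γ Δ Γ' h
  rw [Finset.union_eq_left.mpr h1] at l1
  have l2 := wkR c Γ' Δ Δ' l1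
  rwa [Finset.union_eq_left.mpr h2] at l2

private lemma rcomm {c : Bool} {Γ Δ : Ctx} {a b : Fml}
    (h : lTS4 c Γ (insert a (insert b Δ))) : lTS4 c Γ (insert b (insert a Δ)) := by
  rwa [Finset.insert_comm] at h

private lemma rcomm' {c : Bool} {Γ Δ : Ctx} {a b d : Fml}
    (h : lTS4 c Γ (insert a (insert b (insert d Δ)))) :
    lTS4 c Γ (insert a (insert d (insert b Δ))) := by
  rwa [Finset.insert_comm b d] at h

private lemma ridem {c : Bool} {Γ Δ : Ctx} {a : Fml}
    (h : lTS4 c Γ (insert a (insert a Δ))) : lTS4 c Γ (insert a Δ) := by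
  rwa [Finset.insert_idem] at h

/-! ### The main lemma -/

private theorem Umain (n : ℕ)
    (Urec : ∀ φ' ψ' : Fml, sizeOf φ' + sizeOf ψ' < n → (φ' = ψ'.neg ∨ ψ' = φ'.neg) →
      ∀ {c : Bool} {Γ Δ : Ctx}, lTS4 c Γ Δ → c = false →
        lTS4 false (Γ.erase φ') (insert ψ' Δ))
    (φ ψ : Fml) (hn : sizeOf φ + sizeOf ψ = n)
    (hd : φ = ψ.neg ∨ (ψ = φ.neg ∧ ∀ τ : Fml, φ ≠ τ.neg))
    {c : Bool} {Γ Δ : Ctx} (h : lTS4 c Γ Δ) (hc : c = false) :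
    lTS4 false (Γ.erase φ) (insert ψ Δ) := by
  induction h with
  | initV c p =>
    by_cases hf : φ = var p
    · subst hf
      obtain ⟨rfl, -⟩ : ψ = (var p).neg ∧ True := by
        rcases hd with hd | ⟨hd, -⟩
        · simp at hd
        · exact ⟨hd, trivial⟩
      rw [Finset.erase_singleton]
      exact lTS4.initR false p
    · rw [Finset.erase_eq_of_notMem (by simp [hf])]
      exact lTS4.weR _ _ _ _ (lTS4.initV false p)
  | initNV c p =>
    by_cases hf : φ = (var p).neg
    · subst hf
      obtain rfl : ψ = var p := by
        rcases hd with hd | ⟨-, hd2⟩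
        · injection hd with hd; exact hd.symm
        · exact absurd rfl (hd2 _)
      rw [Finset.erase_singleton]
      have := lTS4.initR false p
      rwa [Finset.pair_comm] at this
    · rw [Finset.erase_eq_of_notMem (by simp [hf])]
      exact lTS4.weR _ _ _ _ (lTS4.initNV false p)
  | initL c p =>
    by_cases hf1 : φ = (var p).neg
    · subst hf1
      obtain rfl : ψ = var p := by
        rcases hd with hd | ⟨-, hd2⟩
        · injection hd with hd; exact hd.symm
        · exact absurd rfl (hd2 _)
      have he : ({(var p).neg, var p} : Ctx).erase ((var p).neg) = {var p} := by
        rw [show ({(var p).neg, var p} : Ctx) = insert ((var p).neg) {var p} from rfl,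
            Finset.erase_insert_eq_erase,
            Finset.erase_eq_of_notMem (by simp)]
      rw [he]
      exact lTS4.initV false p
    · by_cases hf2 : φ = var p
      · subst hf2
        obtain rfl : ψ = (var p).neg := by
          rcases hd with hd | ⟨hd, -⟩
          · simp at hd
          · exact hd
        have he : ({(var p).neg, var p} : Ctx).erase (var p) = {(var p).neg} := by
          rw [show ({(var p).neg, var p} : Ctx) = insert ((var p).neg) {var p} from rfl,
              Finset.erase_insert_of_ne (by simp), Finset.erase_singleton]
          rfl
        rw [he]
        exact lTS4.initNV false p
      · rw [Finset.erase_eq_of_notMem (by simp [hf1, hf2])]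
        exact lTS4.weR _ _ _ _ (lTS4.initL false p)
  | initR c p =>
    rw [Finset.erase_empty]
    exact lTS4.weR _ _ _ _ (lTS4.initR false p)
  | cut Γ Δ a hp1 hp2 ih1 ih2 =>
    exact absurd hc (by decide)
  | weL c Γ Δ a hp ih =>
    subst hc
    by_cases hf : φ = a
    · subst hf
      rw [Finset.erase_insert_eq_erase]
      exact ih rfl
    · rw [Finset.erase_insert_of_ne (Ne.symm hf)]
      exact lTS4.weL _ _ _ _ (ih rfl)
  | weR c Γ Δ a hp ih =>
    subst hc
    exact rcomm (lTS4.weR _ _ _ _ (ih rfl))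
  | andL c Γ Δ a b hp ih =>
    subst hc
    by_cases hf : φ = a.and b
    · subst hf
      obtain rfl : ψ = (a.and b).neg := by
        rcases hd with hd | ⟨hd, -⟩
        · simp at hd
        · exact hd
      rw [Finset.erase_insert_eq_erase]
      exact ridem (lTS4.nandR _ _ _ _ _ (mono (ih rfl) sub2 (le_refl _)))
    · rw [Finset.erase_insert_of_ne (Ne.symm hf)]
      exact lTS4.andL _ _ _ _ _ (mono (ih rfl) sub2 (le_refl _))
  | andR c Γ Δ a b hp1 hp2 ih1 ih2 =>
    subst hc
    exact rcomm (lTS4.andR _ _ _ _ _ (rcomm (ih1 rfl)) (rcomm (ih2 rfl)))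
  | orL c Γ Δ a b hp1 hp2 ih1 ih2 =>
    subst hc
    by_cases hf : φ = a.or b
    · subst hf
      obtain rfl : ψ = (a.or b).neg := by
        rcases hd with hd | ⟨hd, -⟩
        · simp at hd
        · exact hd
      rw [Finset.erase_insert_eq_erase]
      exact ridem (lTS4.norR _ _ _ _ _ (mono (ih1 rfl) sub1 (le_refl _))
        (mono (ih2 rfl) sub1 (le_refl _)))
    · rw [Finset.erase_insert_of_ne (Ne.symm hf)]
      exact lTS4.orL _ _ _ _ _ (mono (ih1 rfl) sub1 (le_refl _))
        (mono (ih2 rfl) sub1 (le_refl _))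
  | orR c Γ Δ a b hp ih =>
    subst hc
    exact rcomm (lTS4.orR _ _ _ _ _ (rcomm' (rcomm (ih rfl))))
  | impL c Γ Δ a b hp1 hp2 ih1 ih2 =>
    subst hc
    by_cases hf : φ = a.imp b
    · subst hf
      obtain rfl : ψ = (a.imp b).neg := by
        rcases hd with hd | ⟨hd, -⟩
        · simp at hd
        · exact hd
      rw [Finset.erase_insert_eq_erase]
      exact ridem (lTS4.nimpR _ _ _ _ _ (rcomm (ih1 rfl)) (mono (ih2 rfl) sub1 (le_refl _)))
    · rw [Finset.erase_insert_of_ne (Ne.symm hf)]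
      exact lTS4.impL _ _ _ _ _ (rcomm (ih1 rfl)) (mono (ih2 rfl) sub1 (le_refl _))
  | impR c Γ Δ a b hp ih =>
    subst hc
    exact rcomm (lTS4.impR _ _ _ _ _ (mono (rcomm (ih rfl)) sub1 (le_refl _)))
  | boxL c Γ Δ a hp ih =>
    subst hc
    by_cases hf : φ = a.box
    · subst hf
      obtain rfl : ψ = a.box.neg := by
        rcases hd with hd | ⟨hd, -⟩
        · simp at hd
        · exact hd
      rw [Finset.erase_insert_eq_erase]
      exact ridem (lTS4.nboxR _ _ _ _ (mono (ih rfl) sub1 (le_refl _)))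
    · rw [Finset.erase_insert_of_ne (Ne.symm hf)]
      exact lTS4.boxL _ _ _ _ (mono (ih rfl) sub1 (le_refl _))
  | boxR c Γ₁ Γ₂ Δ₁ Δ₂ a hp ih =>
    subst hc
    by_cases hm : φ ∈ boxS Γ₁ ∪ ndiaS Γ₂
    · simp only [boxS, ndiaS, Finset.mem_union, Finset.mem_image] at hm
      rcases hm with ⟨g, hg, rfl⟩ | ⟨g, hg, rfl⟩
      · obtain rfl : ψ = (box g).neg := by
          rcases hd with hd | ⟨hd, -⟩
          · simp at hd
          · exact hd
        rw [erase_box, Finset.insert_comm, insert_nbox_D]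
        apply lTS4.boxR
        have h1 := rcomm (ih rfl)
        rw [erase_box, insert_nbox_D] at h1
        exact h1
      · obtain rfl : ψ = dia g := by
          rcases hd with hd | ⟨-, hd2⟩
          · injection hd with hd; exact hd.symm
          · exact absurd rfl (hd2 _)
        rw [erase_ndia, Finset.insert_comm, insert_dia_D]
        apply lTS4.boxR
        have h1 := rcomm (ih rfl)
        rw [erase_ndia, insert_dia_D] at h1
        exact h1
    · rw [Finset.erase_eq_of_notMem hm]
      exact lTS4.weR _ _ _ _ (lTS4.boxR _ _ _ _ _ _ hp)
  | diaL c Γ₁ Γ₂ Δ₁ Δ₂ a hp ih =>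
    subst hc
    by_cases hf : φ = a.dia
    · subst hf
      obtain rfl : ψ = a.dia.neg := by
        rcases hd with hd | ⟨hd, -⟩
        · simp at hd
        · exact hd
      rw [Finset.erase_insert_eq_erase, Finset.erase_eq_of_notMem (dia_nmem a Γ₁ Γ₂)]
      exact lTS4.ndiaR _ _ _ _ _ _ hp
    · rw [Finset.erase_insert_of_ne (Ne.symm hf)]
      by_cases hm : φ ∈ boxS Γ₁ ∪ ndiaS Γ₂
      · simp only [boxS, ndiaS, Finset.mem_union, Finset.mem_image] at hm
        rcases hm with ⟨g, hg, rfl⟩ | ⟨g, hg, rfl⟩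
        · obtain rfl : ψ = (box g).neg := by
            rcases hd with hd | ⟨hd, -⟩
            · simp at hd
            · exact hd
          rw [erase_box, insert_nbox_D]
          apply lTS4.diaL
          have h1 := mono (ih rfl) (sub1 (a := a)) (le_refl _)
          rw [erase_box] at h1
          rwa [insert_nbox_D] at h1
        · obtain rfl : ψ = dia g := by
            rcases hd with hd | ⟨-, hd2⟩
            · injection hd with hd; exact hd.symm
            · exact absurd rfl (hd2 _)
          rw [erase_ndia, insert_dia_D]
          apply lTS4.diaL
          have h1 := mono (ih rfl) (sub1 (a := a)) (le_refl _)
          rw [erase_ndia] at h1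
          rwa [insert_dia_D] at h1
      · rw [Finset.erase_eq_of_notMem hm]
        exact lTS4.weR _ _ _ _ (lTS4.diaL _ _ _ _ _ _ hp)
  | diaR c Γ Δ a hp ih =>
    subst hc
    exact rcomm (lTS4.diaR _ _ _ _ (rcomm (ih rfl)))
  | nnL c Γ Δ a hp ih =>
    subst hc
    by_cases hf : φ = a.neg.neg
    · subst hf
      obtain rfl : ψ = a.neg := by
        rcases hd with hd | ⟨-, hd2⟩
        · injection hd with hd; exact hd.symm
        · exact absurd rfl (hd2 _)
      rw [Finset.erase_insert_eq_erase]
      have h1 : lTS4 false (insert a (Γ.erase a.neg.neg)) (insert a.neg Δ) :=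
        mono (ih rfl) sub1 (le_refl _)
      have h2 := Urec a a.neg (by rw [← hn]; simp; omega) (Or.inr rfl) h1 rfl
      have h3 : lTS4 false (Γ.erase a.neg.neg) (insert a.neg (insert a.neg Δ)) := by
        refine mono h2 ?_ (le_refl _)
        rw [Finset.erase_insert_eq_erase]
        exact Finset.erase_subset _ _
      exact ridem h3
    · rw [Finset.erase_insert_of_ne (Ne.symm hf)]
      exact lTS4.nnL _ _ _ _ (mono (ih rfl) sub1 (le_refl _))
  | nnR c Γ Δ a hp ih =>
    subst hc
    exact rcomm (lTS4.nnR _ _ _ _ (rcomm (ih rfl)))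
  | nandL c Γ Δ a b hp1 hp2 ih1 ih2 =>
    subst hc
    by_cases hf : φ = (a.and b).neg
    · subst hf
      obtain rfl : ψ = a.and b := by
        rcases hd with hd | ⟨-, hd2⟩
        · injection hd with hd; exact hd.symm
        · exact absurd rfl (hd2 _)
      rw [Finset.erase_insert_eq_erase]
      exact ridem (lTS4.andR _ _ _ _ _ (rcomm (ih1 rfl)) (rcomm (ih2 rfl)))
    · rw [Finset.erase_insert_of_ne (Ne.symm hf)]
      exact lTS4.nandL _ _ _ _ _ (rcomm (ih1 rfl)) (rcomm (ih2 rfl))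
  | nandR c Γ Δ a b hp ih =>
    subst hc
    exact rcomm (lTS4.nandR _ _ _ _ _ (mono (ih rfl) sub2 (le_refl _)))
  | norL c Γ Δ a b hp ih =>
    subst hc
    by_cases hf : φ = (a.or b).neg
    · subst hf
      obtain rfl : ψ = a.or b := by
        rcases hd with hd | ⟨-, hd2⟩
        · injection hd with hd; exact hd.symm
        · exact absurd rfl (hd2 _)
      rw [Finset.erase_insert_eq_erase]
      exact ridem (lTS4.orR _ _ _ _ _ (rcomm' (rcomm (ih rfl))))
    · rw [Finset.erase_insert_of_ne (Ne.symm hf)]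
      exact lTS4.norL _ _ _ _ _ (rcomm' (rcomm (ih rfl)))
  | norR c Γ Δ a b hp1 hp2 ih1 ih2 =>
    subst hc
    exact rcomm (lTS4.norR _ _ _ _ _ (mono (ih1 rfl) sub1 (le_refl _))
      (mono (ih2 rfl) sub1 (le_refl _)))
  | nimpL c Γ Δ a b hp ih =>
    subst hc
    by_cases hf : φ = (a.imp b).neg
    · subst hf
      obtain rfl : ψ = a.imp b := by
        rcases hd with hd | ⟨-, hd2⟩
        · injection hd with hd; exact hd.symm
        · exact absurd rfl (hd2 _)
      rw [Finset.erase_insert_eq_erase]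
      exact ridem (lTS4.impR _ _ _ _ _ (mono (rcomm (ih rfl)) sub1 (le_refl _)))
    · rw [Finset.erase_insert_of_ne (Ne.symm hf)]
      exact lTS4.nimpL _ _ _ _ _ (mono (rcomm (ih rfl)) sub1 (le_refl _))
  | nimpR c Γ Δ a b hp1 hp2 ih1 ih2 =>
    subst hc
    exact rcomm (lTS4.nimpR _ _ _ _ _ (rcomm (ih1 rfl)) (mono (ih2 rfl) sub1 (le_refl _)))
  | nboxL c Γ₁ Γ₂ Δ₁ Δ₂ a hp ih =>
    subst hc
    by_cases hf : φ = a.box.neg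
    · subst hf
      obtain rfl : ψ = a.box := by
        rcases hd with hd | ⟨-, hd2⟩
        · injection hd with hd; exact hd.symm
        · exact absurd rfl (hd2 _)
      rw [Finset.erase_insert_eq_erase, Finset.erase_eq_of_notMem (nbox_nmem a Γ₁ Γ₂)]
      exact lTS4.boxR _ _ _ _ _ _ hp
    · rw [Finset.erase_insert_of_ne (Ne.symm hf)]
      by_cases hm : φ ∈ boxS Γ₁ ∪ ndiaS Γ₂
      · simp only [boxS, ndiaS, Finset.mem_union, Finset.mem_image] at hm
        rcases hm with ⟨g, hg, rfl⟩ | ⟨g, hg, rfl⟩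
        · obtain rfl : ψ = (box g).neg := by
            rcases hd with hd | ⟨hd, -⟩
            · simp at hd
            · exact hd
          rw [erase_box, insert_nbox_D]
          apply lTS4.nboxL
          have h1 := rcomm (ih rfl)
          rw [erase_box, insert_nbox_D] at h1
          exact h1
        · obtain rfl : ψ = dia g := by
            rcases hd with hd | ⟨-, hd2⟩
            · injection hd with hd; exact hd.symm
            · exact absurd rfl (hd2 _)
          rw [erase_ndia, insert_dia_D]
          apply lTS4.nboxL
          have h1 := rcomm (ih rfl)
          rw [erase_ndia, insert_dia_D] at h1
          exact h1
      · rw [Finset.erase_eq_of_notMem hm]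
        exact lTS4.weR _ _ _ _ (lTS4.nboxL _ _ _ _ _ _ hp)
  | nboxR c Γ Δ a hp ih =>
    subst hc
    exact rcomm (lTS4.nboxR _ _ _ _ (mono (ih rfl) sub1 (le_refl _)))
  | ndiaL c Γ Δ a hp ih =>
    subst hc
    by_cases hf : φ = a.dia.neg
    · subst hf
      obtain rfl : ψ = a.dia := by
        rcases hd with hd | ⟨-, hd2⟩
        · injection hd with hd; exact hd.symm
        · exact absurd rfl (hd2 _)
      rw [Finset.erase_insert_eq_erase]
      exact ridem (lTS4.diaR _ _ _ _ (rcomm (ih rfl)))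
    · rw [Finset.erase_insert_of_ne (Ne.symm hf)]
      exact lTS4.ndiaL _ _ _ _ (rcomm (ih rfl))
  | ndiaR c Γ₁ Γ₂ Δ₁ Δ₂ a hp ih =>
    subst hc
    by_cases hm : φ ∈ boxS Γ₁ ∪ ndiaS Γ₂
    · simp only [boxS, ndiaS, Finset.mem_union, Finset.mem_image] at hm
      rcases hm with ⟨g, hg, rfl⟩ | ⟨g, hg, rfl⟩
      · obtain rfl : ψ = (box g).neg := by
          rcases hd with hd | ⟨hd, -⟩
          · simp at hd
          · exact hd
        rw [erase_box, Finset.insert_comm, insert_nbox_D]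
        apply lTS4.ndiaR
        have h1 := mono (ih rfl) (sub1 (a := a)) (le_refl _)
        rw [erase_box] at h1
        rwa [insert_nbox_D] at h1
      · obtain rfl : ψ = dia g := by
          rcases hd with hd | ⟨-, hd2⟩
          · injection hd with hd; exact hd.symm
          · exact absurd rfl (hd2 _)
        rw [erase_ndia, Finset.insert_comm, insert_dia_D]
        apply lTS4.ndiaR
        have h1 := mono (ih rfl) (sub1 (a := a)) (le_refl _)
        rw [erase_ndia] at h1
        rwa [insert_dia_D] at h1
    · rw [Finset.erase_eq_of_notMem hm]
      exact lTS4.weR _ _ _ _ (lTS4.ndiaR _ _ _ _ _ _ hp)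

private theorem Ulem : ∀ (n : ℕ) (φ ψ : Fml), sizeOf φ + sizeOf ψ = n →
    (φ = ψ.neg ∨ ψ = φ.neg) →
    ∀ {c : Bool} {Γ Δ : Ctx}, lTS4 c Γ Δ → c = false →
      lTS4 false (Γ.erase φ) (insert ψ Δ) := by
  intro n
  induction n using Nat.strong_induction_on with
  | _ n ih =>
    intro φ ψ hn hd c Γ Δ h hc
    have Urec : ∀ φ' ψ' : Fml, sizeOf φ' + sizeOf ψ' < n → (φ' = ψ'.neg ∨ ψ' = φ'.neg) →
        ∀ {c : Bool} {Γ Δ : Ctx}, lTS4 c Γ Δ → c = false →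
          lTS4 false (Γ.erase φ') (insert ψ' Δ) :=
      fun φ' ψ' hlt => ih _ hlt φ' ψ' rfl
    rcases hd with hd | hd
    · exact Umain n Urec φ ψ hn (Or.inl hd) h hc
    · subst hd
      by_cases hneg : ∃ ρ : Fml, φ = ρ.neg
      · obtain ⟨ρ, rfl⟩ := hneg
        have h1 := Urec ρ.neg ρ (by rw [← hn]; simp; omega) (Or.inl rfl) h hc
        exact lTS4.nnR _ _ _ _ h1
      · exact Umain n Urec φ φ.neg hn
          (Or.inr ⟨rfl, fun τ ht => hneg ⟨τ, ht⟩⟩) h hc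

/-- (¬right⁻¹) is admissible in cut-free lTS4. -/
theorem stmt6 (Γ Δ : Ctx) (α : Fml) (h : lTS4 false (insert α.neg Γ) Δ) :
    lTS4 false Γ (insert α Δ) := by
  have h1 := Ulem _ α.neg α rfl (Or.inl rfl) h rfl
  refine mono h1 ?_ (le_refl _)
  rw [Finset.erase_insert_eq_erase]
  exact Finset.erase_subset _ _
end

section
/- The twist rule (¬□left^T) is derivable in GS4 with cut: if the sequent □Γ₁, □Δ₂ ⊢ ◇Δ₁, ◇Γ₂, α is provable in GS4, then the sequent ¬□α, □Γ₁, ¬◇Γ₂ ⊢ ◇Δ₁, ¬□Δ₂ is provable in GS4. -/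
open Fml

/-- Kripke's sequent calculus GS4; the Boolean index is `true` iff the cut rule is allowed. -/
inductive GS4 : Bool → Ctx → Ctx → Prop
  | initV (c : Bool) (p : ℕ) : GS4 c {var p} {var p}
  | cut (Γ Δ : Ctx) (α : Fml) :
      GS4 true Γ {α} → GS4 true (insert α Γ) Δ → GS4 true Γ Δ
  | weL (c Γ Δ α) : GS4 c Γ Δ → GS4 c (insert α Γ) Δ
  | weR (c Γ Δ α) : GS4 c Γ Δ → GS4 c Γ (insert α Δ)
  | andL (c Γ Δ α β) : GS4 c (insert α (insert β Γ)) Δ → GS4 c (insert (α.and β) Γ) Δ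
  | andR (c Γ Δ α β) : GS4 c Γ (insert α Δ) → GS4 c Γ (insert β Δ) →
      GS4 c Γ (insert (α.and β) Δ)
  | orL (c Γ Δ α β) : GS4 c (insert α Γ) Δ → GS4 c (insert β Γ) Δ →
      GS4 c (insert (α.or β) Γ) Δ
  | orR (c Γ Δ α β) : GS4 c Γ (insert α (insert β Δ)) → GS4 c Γ (insert (α.or β) Δ)
  | impL (c Γ Δ α β) : GS4 c Γ (insert α Δ) → GS4 c (insert β Γ) Δ →
      GS4 c (insert (α.imp β) Γ) Δ
  | impR (c Γ Δ α β) : GS4 c (insert α Γ) (insert β Δ) → GS4 c Γ (insert (α.imp β) Δ)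
  | negL (c Γ Δ α) : GS4 c Γ (insert α Δ) → GS4 c (insert α.neg Γ) Δ
  | negR (c Γ Δ α) : GS4 c (insert α Γ) Δ → GS4 c Γ (insert α.neg Δ)
  | boxL (c Γ Δ α) : GS4 c (insert α Γ) Δ → GS4 c (insert α.box Γ) Δ
  | boxRk (c Γ Δ α) : GS4 c (boxS Γ) (insert α (diaS Δ)) →
      GS4 c (boxS Γ) (insert α.box (diaS Δ))
  | diaLk (c Γ Δ α) : GS4 c (insert α (boxS Γ)) (diaS Δ) →
      GS4 c (insert α.dia (boxS Γ)) (diaS Δ)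
  | diaR (c Γ Δ α) : GS4 c Γ (insert α Δ) → GS4 c Γ (insert α.dia Δ)


lemma GS4.cast {c Γ Γ' Δ Δ'} (hG : Γ = Γ') (hD : Δ = Δ') (h : GS4 c Γ Δ) :
    GS4 c Γ' Δ' := hG ▸ hD ▸ h

lemma moveR (c : Bool) (S : Ctx) : ∀ (Γ Δ : Ctx), GS4 c (boxS S ∪ Γ) Δ →
    GS4 c Γ (nboxS S ∪ Δ) := by
  induction S using Finset.induction_on with
  | empty => intro Γ Δ h; simpa [boxS, nboxS] using h
  | @insert d s hd ih =>
    intro Γ Δ h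
    have h1 : GS4 c (insert (Fml.box d) (boxS s ∪ Γ)) Δ := by
      refine h.cast ?_ rfl
      simp [boxS, Finset.image_insert, Finset.insert_union]
    have h2 := GS4.negR c _ _ _ h1
    have h3 := ih Γ _ h2
    refine h3.cast rfl ?_
    ext x
    simp only [nboxS, Finset.image_insert, Finset.mem_union, Finset.mem_insert]
    tauto

lemma moveL (c : Bool) (S : Ctx) : ∀ (Γ Δ : Ctx), GS4 c Γ (diaS S ∪ Δ) →
    GS4 c (ndiaS S ∪ Γ) Δ := by
  induction S using Finset.induction_on with
  | empty => intro Γ Δ h; simpa [diaS, ndiaS] using h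
  | @insert d s hd ih =>
    intro Γ Δ h
    have h1 : GS4 c Γ (insert (Fml.dia d) (diaS s ∪ Δ)) := by
      refine h.cast rfl ?_
      simp [diaS, Finset.image_insert, Finset.insert_union]
    have h2 := GS4.negL c _ _ _ h1
    have h3 := ih _ Δ h2
    refine h3.cast ?_ rfl
    ext x
    simp only [ndiaS, Finset.image_insert, Finset.mem_union, Finset.mem_insert]
    tauto

/-- the twist rule (¬□left^T) is derivable in GS4 with cut. -/
theorem stmt10 (Γ₁ Γ₂ Δ₁ Δ₂ : Ctx) (α : Fml)
    (h : GS4 true (boxS Γ₁ ∪ boxS Δ₂) (insert α (diaS Δ₁ ∪ diaS Γ₂))) :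
    GS4 true (insert α.box.neg (boxS Γ₁ ∪ ndiaS Γ₂)) (diaS Δ₁ ∪ nboxS Δ₂) := by
  have hb : GS4 true (boxS (Γ₁ ∪ Δ₂)) (insert α (diaS (Δ₁ ∪ Γ₂))) := by
    refine h.cast ?_ ?_ <;> simp [boxS, diaS, Finset.image_union]
  have h2 := GS4.boxRk true _ _ _ hb
  have h2' : GS4 true (boxS Δ₂ ∪ boxS Γ₁) (insert α.box (diaS (Δ₁ ∪ Γ₂))) := by
    refine h2.cast ?_ rfl
    simp [boxS, Finset.image_union, Finset.union_comm]
  have h3 := moveR true Δ₂ _ _ h2'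
  have h4 : GS4 true (boxS Γ₁) (diaS Γ₂ ∪ insert α.box (diaS Δ₁ ∪ nboxS Δ₂)) := by
    refine h3.cast rfl ?_
    ext x
    simp only [diaS, Finset.image_union, Finset.mem_union, Finset.mem_insert]
    tauto
  have h5 := moveL true Γ₂ _ _ h4
  have h6 : GS4 true (boxS Γ₁ ∪ ndiaS Γ₂) (insert α.box (diaS Δ₁ ∪ nboxS Δ₂)) :=
    h5.cast (Finset.union_comm _ _) rfl
  exact GS4.negL true _ _ _ h6
end

section
/- The sequent ¬□p ⊢ ¬□p, for a propositional variable p, is not provable in the cut-free fragment of the calculus lTS4*, which is lTS4 with the twist rules (¬□left) and (¬◇right) replaced by the simple rules (¬□left*): from □Γ ⊢ ◇Δ, α infer ¬□α, □Γ ⊢ ◇Δ, and (¬◇right*): from α, □Γ ⊢ ◇Δ infer □Γ ⊢ ◇Δ, ¬◇α. -/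
open Fml

/-- Cut-free lTS4*, i.e. cut-free lTS4 with (¬□left) and (¬◇right) replaced by the simple
    rules (¬□left*) and (¬◇right*). -/
inductive lTS4star : Ctx → Ctx → Prop
  | initV (p : ℕ) : lTS4star {var p} {var p}
  | initNV (p : ℕ) : lTS4star {neg (var p)} {neg (var p)}
  | initL (p : ℕ) : lTS4star {neg (var p), var p} ∅
  | initR (p : ℕ) : lTS4star ∅ {neg (var p), var p}
  | weL (Γ Δ α) : lTS4star Γ Δ → lTS4star (insert α Γ) Δ
  | weR (Γ Δ α) : lTS4star Γ Δ → lTS4star Γ (insert α Δ)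
  | andL (Γ Δ α β) : lTS4star (insert α (insert β Γ)) Δ → lTS4star (insert (α.and β) Γ) Δ
  | andR (Γ Δ α β) : lTS4star Γ (insert α Δ) → lTS4star Γ (insert β Δ) →
      lTS4star Γ (insert (α.and β) Δ)
  | orL (Γ Δ α β) : lTS4star (insert α Γ) Δ → lTS4star (insert β Γ) Δ →
      lTS4star (insert (α.or β) Γ) Δ
  | orR (Γ Δ α β) : lTS4star Γ (insert α (insert β Δ)) → lTS4star Γ (insert (α.or β) Δ)
  | impL (Γ Δ α β) : lTS4star Γ (insert α Δ) → lTS4star (insert β Γ) Δ →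
      lTS4star (insert (α.imp β) Γ) Δ
  | impR (Γ Δ α β) : lTS4star (insert α Γ) (insert β Δ) → lTS4star Γ (insert (α.imp β) Δ)
  | boxL (Γ Δ α) : lTS4star (insert α Γ) Δ → lTS4star (insert α.box Γ) Δ
  | boxR (Γ₁ Γ₂ Δ₁ Δ₂ α) :
      lTS4star (boxS Γ₁ ∪ ndiaS Γ₂) (insert α (diaS Δ₁ ∪ nboxS Δ₂)) →
      lTS4star (boxS Γ₁ ∪ ndiaS Γ₂) (insert α.box (diaS Δ₁ ∪ nboxS Δ₂))
  | diaL (Γ₁ Γ₂ Δ₁ Δ₂ α) :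
      lTS4star (insert α (boxS Γ₁ ∪ ndiaS Γ₂)) (diaS Δ₁ ∪ nboxS Δ₂) →
      lTS4star (insert α.dia (boxS Γ₁ ∪ ndiaS Γ₂)) (diaS Δ₁ ∪ nboxS Δ₂)
  | diaR (Γ Δ α) : lTS4star Γ (insert α Δ) → lTS4star Γ (insert α.dia Δ)
  | nnL (Γ Δ α) : lTS4star (insert α Γ) Δ → lTS4star (insert α.neg.neg Γ) Δ
  | nnR (Γ Δ α) : lTS4star Γ (insert α Δ) → lTS4star Γ (insert α.neg.neg Δ)
  | nandL (Γ Δ α β) : lTS4star Γ (insert α Δ) → lTS4star Γ (insert β Δ) →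
      lTS4star (insert (α.and β).neg Γ) Δ
  | nandR (Γ Δ α β) : lTS4star (insert α (insert β Γ)) Δ → lTS4star Γ (insert (α.and β).neg Δ)
  | norL (Γ Δ α β) : lTS4star Γ (insert α (insert β Δ)) → lTS4star (insert (α.or β).neg Γ) Δ
  | norR (Γ Δ α β) : lTS4star (insert α Γ) Δ → lTS4star (insert β Γ) Δ →
      lTS4star Γ (insert (α.or β).neg Δ)
  | nimpL (Γ Δ α β) : lTS4star (insert α Γ) (insert β Δ) → lTS4star (insert (α.imp β).neg Γ) Δ
  | nimpR (Γ Δ α β) : lTS4star Γ (insert α Δ) → lTS4star (insert β Γ) Δ →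
      lTS4star Γ (insert (α.imp β).neg Δ)
  | nboxLstar (Γ Δ α) :
      lTS4star (boxS Γ) (insert α (diaS Δ)) →
      lTS4star (insert α.box.neg (boxS Γ)) (diaS Δ)
  | nboxR (Γ Δ α) : lTS4star (insert α Γ) Δ → lTS4star Γ (insert α.box.neg Δ)
  | ndiaL (Γ Δ α) : lTS4star Γ (insert α Δ) → lTS4star (insert α.dia.neg Γ) Δ
  | ndiaRstar (Γ Δ α) :
      lTS4star (insert α (boxS Γ)) (diaS Δ) →
      lTS4star (boxS Γ) (insert α.dia.neg (diaS Δ))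


section Aux
open Fml

private lemma boxS_notMem {q : ℕ} {Γ : Ctx} :
    boxS Γ ⊆ ({var q, (var q).box.neg} : Ctx) → boxS Γ = ∅ := by
  intro h
  rw [Finset.eq_empty_iff_forall_notMem]
  intro x hx
  obtain ⟨g, _, rfl⟩ := Finset.mem_image.mp hx
  have := h hx
  simp at this

private lemma diaS_emptyF {q : ℕ} {Δ : Ctx} :
    diaS Δ ⊆ ({(var q).box.neg} : Ctx) → diaS Δ = ∅ := by
  intro h
  rw [Finset.eq_empty_iff_forall_notMem]
  intro x hx
  obtain ⟨g, _, rfl⟩ := Finset.mem_image.mp hx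
  have := h hx
  simp at this

private lemma key (p : ℕ) : ∀ Γ Δ, lTS4star Γ Δ →
    ¬ ((Γ ⊆ ({var p, (var p).box.neg} : Ctx) ∧ Δ ⊆ ({(var p).box.neg} : Ctx)) ∨
       (Γ = ∅ ∧ Δ ⊆ ({var p} : Ctx))) := by
  intro Γ Δ h
  induction h with
  | initV q =>
      rintro (⟨h1, h2⟩ | ⟨h1, h2⟩)
      · exact absurd (h2 (Finset.mem_singleton_self _)) (by simp)
      · simp at h1
  | initNV q =>
      rintro (⟨h1, h2⟩ | ⟨h1, h2⟩)
      · exact absurd (h1 (Finset.mem_singleton_self _)) (by simp)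
      · simp at h1
  | initL q =>
      rintro (⟨h1, h2⟩ | ⟨h1, h2⟩)
      · exact absurd (h1 (Finset.mem_insert_self _ _)) (by simp)
      · simp at h1
  | initR q =>
      rintro (⟨h1, h2⟩ | ⟨h1, h2⟩)
      · exact absurd (h2 (Finset.mem_insert_self _ _)) (by simp)
      · exact absurd (h2 (Finset.mem_insert_self _ _)) (by simp)
  | weL Γ Δ α _ ih =>
      rintro (⟨h1, h2⟩ | ⟨h1, h2⟩)
      · exact ih (Or.inl ⟨(Finset.insert_subset_iff.mp h1).2, h2⟩)
      · simp at h1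
  | weR Γ Δ α _ ih =>
      rintro (⟨h1, h2⟩ | ⟨h1, h2⟩)
      · exact ih (Or.inl ⟨h1, (Finset.insert_subset_iff.mp h2).2⟩)
      · exact ih (Or.inr ⟨h1, (Finset.insert_subset_iff.mp h2).2⟩)
  | andL Γ Δ α β _ ih =>
      rintro (⟨h1, h2⟩ | ⟨h1, h2⟩)
      · exact absurd (h1 (Finset.mem_insert_self _ _)) (by simp)
      · simp at h1
  | andR Γ Δ α β _ _ ih ih2 =>
      rintro (⟨h1, h2⟩ | ⟨h1, h2⟩)
      · exact absurd (h2 (Finset.mem_insert_self _ _)) (by simp)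
      · exact absurd (h2 (Finset.mem_insert_self _ _)) (by simp)
  | orL Γ Δ α β _ _ ih ih2 =>
      rintro (⟨h1, h2⟩ | ⟨h1, h2⟩)
      · exact absurd (h1 (Finset.mem_insert_self _ _)) (by simp)
      · simp at h1
  | orR Γ Δ α β _ ih =>
      rintro (⟨h1, h2⟩ | ⟨h1, h2⟩)
      · exact absurd (h2 (Finset.mem_insert_self _ _)) (by simp)
      · exact absurd (h2 (Finset.mem_insert_self _ _)) (by simp)
  | impL Γ Δ α β _ _ ih ih2 =>
      rintro (⟨h1, h2⟩ | ⟨h1, h2⟩)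
      · exact absurd (h1 (Finset.mem_insert_self _ _)) (by simp)
      · simp at h1
  | impR Γ Δ α β _ ih =>
      rintro (⟨h1, h2⟩ | ⟨h1, h2⟩)
      · exact absurd (h2 (Finset.mem_insert_self _ _)) (by simp)
      · exact absurd (h2 (Finset.mem_insert_self _ _)) (by simp)
  | boxL Γ Δ α _ ih =>
      rintro (⟨h1, h2⟩ | ⟨h1, h2⟩)
      · exact absurd (h1 (Finset.mem_insert_self _ _)) (by simp)
      · simp at h1
  | boxR Γ₁ Γ₂ Δ₁ Δ₂ α _ ih =>
      rintro (⟨h1, h2⟩ | ⟨h1, h2⟩)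
      · exact absurd (h2 (Finset.mem_insert_self _ _)) (by simp)
      · exact absurd (h2 (Finset.mem_insert_self _ _)) (by simp)
  | diaL Γ₁ Γ₂ Δ₁ Δ₂ α _ ih =>
      rintro (⟨h1, h2⟩ | ⟨h1, h2⟩)
      · exact absurd (h1 (Finset.mem_insert_self _ _)) (by simp)
      · simp at h1
  | diaR Γ Δ α _ ih =>
      rintro (⟨h1, h2⟩ | ⟨h1, h2⟩)
      · exact absurd (h2 (Finset.mem_insert_self _ _)) (by simp)
      · exact absurd (h2 (Finset.mem_insert_self _ _)) (by simp)
  | nnL Γ Δ α _ ih =>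
      rintro (⟨h1, h2⟩ | ⟨h1, h2⟩)
      · exact absurd (h1 (Finset.mem_insert_self _ _)) (by simp)
      · simp at h1
  | nnR Γ Δ α _ ih =>
      rintro (⟨h1, h2⟩ | ⟨h1, h2⟩)
      · exact absurd (h2 (Finset.mem_insert_self _ _)) (by simp)
      · exact absurd (h2 (Finset.mem_insert_self _ _)) (by simp)
  | nandL Γ Δ α β _ _ ih ih2 =>
      rintro (⟨h1, h2⟩ | ⟨h1, h2⟩)
      · exact absurd (h1 (Finset.mem_insert_self _ _)) (by simp)
      · simp at h1
  | nandR Γ Δ α β _ ih =>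
      rintro (⟨h1, h2⟩ | ⟨h1, h2⟩)
      · exact absurd (h2 (Finset.mem_insert_self _ _)) (by simp)
      · exact absurd (h2 (Finset.mem_insert_self _ _)) (by simp)
  | norL Γ Δ α β _ ih =>
      rintro (⟨h1, h2⟩ | ⟨h1, h2⟩)
      · exact absurd (h1 (Finset.mem_insert_self _ _)) (by simp)
      · simp at h1
  | norR Γ Δ α β _ _ ih ih2 =>
      rintro (⟨h1, h2⟩ | ⟨h1, h2⟩)
      · exact absurd (h2 (Finset.mem_insert_self _ _)) (by simp)
      · exact absurd (h2 (Finset.mem_insert_self _ _)) (by simp)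
  | nimpL Γ Δ α β _ ih =>
      rintro (⟨h1, h2⟩ | ⟨h1, h2⟩)
      · exact absurd (h1 (Finset.mem_insert_self _ _)) (by simp)
      · simp at h1
  | nimpR Γ Δ α β _ _ ih ih2 =>
      rintro (⟨h1, h2⟩ | ⟨h1, h2⟩)
      · exact absurd (h2 (Finset.mem_insert_self _ _)) (by simp)
      · exact absurd (h2 (Finset.mem_insert_self _ _)) (by simp)
  | nboxLstar Γ Δ α _ ih =>
      rintro (⟨h1, h2⟩ | ⟨h1, h2⟩)
      · obtain ⟨hα, hΓ⟩ := Finset.insert_subset_iff.mp h1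
        have hα' : α = var p := by simpa using hα
        have hbox : boxS Γ = ∅ := boxS_notMem hΓ
        have hdia : diaS Δ = ∅ := diaS_emptyF h2
        apply ih
        right
        refine ⟨hbox, ?_⟩
        rw [hdia, hα']
        simp
      · simp at h1
  | nboxR Γ Δ α _ ih =>
      rintro (⟨h1, h2⟩ | ⟨h1, h2⟩)
      · obtain ⟨hα, hΔ⟩ := Finset.insert_subset_iff.mp h2
        have hα' : α = var p := by simpa using hα
        apply ih
        left
        refine ⟨Finset.insert_subset_iff.mpr ⟨?_, h1⟩, hΔ⟩
        rw [hα']; simp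
      · exact absurd ((Finset.insert_subset_iff.mp h2).1) (by simp)
  | ndiaL Γ Δ α _ ih =>
      rintro (⟨h1, h2⟩ | ⟨h1, h2⟩)
      · exact absurd (h1 (Finset.mem_insert_self _ _)) (by simp)
      · simp at h1
  | ndiaRstar Γ Δ α _ ih =>
      rintro (⟨h1, h2⟩ | ⟨h1, h2⟩)
      · exact absurd ((Finset.insert_subset_iff.mp h2).1) (by simp)
      · exact absurd ((Finset.insert_subset_iff.mp h2).1) (by simp)

end Aux

/-- the sequent ¬□p ⊢ ¬□p is not provable in cut-free lTS4*. -/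
theorem stmt14 (p : ℕ) :
    ¬ lTS4star {((var p).box.neg : Fml)} {((var p).box.neg : Fml)} := by
  intro h
  exact key p _ _ h (Or.inl ⟨by simp, by simp⟩)
end

section
/- The negation rules are admissible in cut-free TCL: if Γ ⊢ Δ, α is provable in cut-free TCL then ¬α, Γ ⊢ Δ is provable in cut-free TCL, and if α, Γ ⊢ Δ is provable in cut-free TCL then Γ ⊢ Δ, ¬α is provable in cut-free TCL. -/
inductive PFml : Type
  | var : ℕ → PFml
  | and : PFml → PFml → PFml
  | or  : PFml → PFml → PFml
  | imp : PFml → PFml → PFml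
  | neg : PFml → PFml
  deriving DecidableEq

open PFml

abbrev PCtx := Finset PFml

/-- Gentzen's propositional LK; the Boolean index is `true` iff cut is allowed. -/
inductive LK : Bool → PCtx → PCtx → Prop
  | initV (c : Bool) (p : ℕ) : LK c {var p} {var p}
  | cut (Γ Δ : PCtx) (α : PFml) :
      LK true Γ {α} → LK true (insert α Γ) Δ → LK true Γ Δ
  | weL (c Γ Δ α) : LK c Γ Δ → LK c (insert α Γ) Δ
  | weR (c Γ Δ α) : LK c Γ Δ → LK c Γ (insert α Δ)
  | andL (c Γ Δ α β) : LK c (insert α (insert β Γ)) Δ → LK c (insert (α.and β) Γ) Δ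
  | andR (c Γ Δ α β) : LK c Γ (insert α Δ) → LK c Γ (insert β Δ) → LK c Γ (insert (α.and β) Δ)
  | orL (c Γ Δ α β) : LK c (insert α Γ) Δ → LK c (insert β Γ) Δ → LK c (insert (α.or β) Γ) Δ
  | orR (c Γ Δ α β) : LK c Γ (insert α (insert β Δ)) → LK c Γ (insert (α.or β) Δ)
  | impL (c Γ Δ α β) : LK c Γ (insert α Δ) → LK c (insert β Γ) Δ → LK c (insert (α.imp β) Γ) Δ
  | impR (c Γ Δ α β) : LK c (insert α Γ) (insert β Δ) → LK c Γ (insert (α.imp β) Δ)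
  | negL (c Γ Δ α) : LK c Γ (insert α Δ) → LK c (insert α.neg Γ) Δ
  | negR (c Γ Δ α) : LK c (insert α Γ) Δ → LK c Γ (insert α.neg Δ)

/-- The propositional twist sequent calculus TCL (the modal-free fragment of lTS4);
    the Boolean index is `true` iff cut is allowed. -/
inductive TCL : Bool → PCtx → PCtx → Prop
  | initV (c : Bool) (p : ℕ) : TCL c {var p} {var p}
  | initNV (c : Bool) (p : ℕ) : TCL c {neg (var p)} {neg (var p)}
  | initL (c : Bool) (p : ℕ) : TCL c {neg (var p), var p} ∅
  | initR (c : Bool) (p : ℕ) : TCL c ∅ {neg (var p), var p}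
  | cut (Γ Δ : PCtx) (α : PFml) :
      TCL true Γ {α} → TCL true (insert α Γ) Δ → TCL true Γ Δ
  | weL (c Γ Δ α) : TCL c Γ Δ → TCL c (insert α Γ) Δ
  | weR (c Γ Δ α) : TCL c Γ Δ → TCL c Γ (insert α Δ)
  | andL (c Γ Δ α β) : TCL c (insert α (insert β Γ)) Δ → TCL c (insert (α.and β) Γ) Δ
  | andR (c Γ Δ α β) : TCL c Γ (insert α Δ) → TCL c Γ (insert β Δ) →
      TCL c Γ (insert (α.and β) Δ)
  | orL (c Γ Δ α β) : TCL c (insert α Γ) Δ → TCL c (insert β Γ) Δ →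
      TCL c (insert (α.or β) Γ) Δ
  | orR (c Γ Δ α β) : TCL c Γ (insert α (insert β Δ)) → TCL c Γ (insert (α.or β) Δ)
  | impL (c Γ Δ α β) : TCL c Γ (insert α Δ) → TCL c (insert β Γ) Δ →
      TCL c (insert (α.imp β) Γ) Δ
  | impR (c Γ Δ α β) : TCL c (insert α Γ) (insert β Δ) → TCL c Γ (insert (α.imp β) Δ)
  | nnL (c Γ Δ α) : TCL c (insert α Γ) Δ → TCL c (insert α.neg.neg Γ) Δ
  | nnR (c Γ Δ α) : TCL c Γ (insert α Δ) → TCL c Γ (insert α.neg.neg Δ)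
  | nandL (c Γ Δ α β) : TCL c Γ (insert α Δ) → TCL c Γ (insert β Δ) →
      TCL c (insert (α.and β).neg Γ) Δ
  | nandR (c Γ Δ α β) : TCL c (insert α (insert β Γ)) Δ → TCL c Γ (insert (α.and β).neg Δ)
  | norL (c Γ Δ α β) : TCL c Γ (insert α (insert β Δ)) → TCL c (insert (α.or β).neg Γ) Δ
  | norR (c Γ Δ α β) : TCL c (insert α Γ) Δ → TCL c (insert β Γ) Δ →
      TCL c Γ (insert (α.or β).neg Δ)
  | nimpL (c Γ Δ α β) : TCL c (insert α Γ) (insert β Δ) → TCL c (insert (α.imp β).neg Γ) Δ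
  | nimpR (c Γ Δ α β) : TCL c Γ (insert α Δ) → TCL c (insert β Γ) Δ →
      TCL c Γ (insert (α.imp β).neg Δ)

/-!
Induction on a cut-free derivation of `Γ₀ ⊢ Δ₀`, generalised to every sequent obtained from it
by weakening and by moving formulas to the other side under a negation; the generalisation is
needed because contexts are sets, so `α` may occur in `Δ` as well. If the principal formula `φ` of
the last rule stays on its side, the rule is reapplied; if it is moved, the matching twist rule
(with `¬¬` and the plain rule when `φ` is itself a negation) derives `¬φ` on the other side from
the same premises. Shifts of initial sequents are initial sequents up to `¬¬`-introduction.
-/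

def NegShift (Γ₀ Δ₀ Γ Δ : PCtx) : Prop :=
  (∀ φ ∈ Γ₀, φ ∈ Γ ∨ φ.neg ∈ Δ) ∧ ∀ ψ ∈ Δ₀, ψ ∈ Δ ∨ ψ.neg ∈ Γ

namespace NegShift

variable {Γ₀ Δ₀ Γ Δ Γ' Δ' : PCtx} {φ : PFml}

theorem refl (Γ Δ : PCtx) : NegShift Γ Δ Γ Δ :=
  ⟨fun _ h => .inl h, fun _ h => .inl h⟩

theorem mono (h : NegShift Γ₀ Δ₀ Γ Δ) (hΓ : Γ ⊆ Γ') (hΔ : Δ ⊆ Δ') : NegShift Γ₀ Δ₀ Γ' Δ' :=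
  ⟨fun φ hφ => (h.1 φ hφ).imp (@hΓ _) (@hΔ _), fun ψ hψ => (h.2 ψ hψ).imp (@hΔ _) (@hΓ _)⟩

theorem insert_left_iff :
    NegShift (insert φ Γ₀) Δ₀ Γ Δ ↔ (φ ∈ Γ ∨ φ.neg ∈ Δ) ∧ NegShift Γ₀ Δ₀ Γ Δ := by
  simp only [NegShift, Finset.forall_mem_insert, and_assoc]

theorem insert_right_iff :
    NegShift Γ₀ (insert φ Δ₀) Γ Δ ↔ (φ ∈ Δ ∨ φ.neg ∈ Γ) ∧ NegShift Γ₀ Δ₀ Γ Δ := by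
  simp only [NegShift, Finset.forall_mem_insert, and_left_comm]

theorem insert_left (h : NegShift Γ₀ Δ₀ Γ Δ) : NegShift (insert φ Γ₀) Δ₀ (insert φ Γ) Δ :=
  insert_left_iff.2 ⟨.inl (Finset.mem_insert_self _ _), h.mono (Finset.subset_insert _ _) le_rfl⟩

theorem insert_right (h : NegShift Γ₀ Δ₀ Γ Δ) : NegShift Γ₀ (insert φ Δ₀) Γ (insert φ Δ) :=
  insert_right_iff.2 ⟨.inl (Finset.mem_insert_self _ _), h.mono le_rfl (Finset.subset_insert _ _)⟩

theorem insert_left_neg (h : NegShift Γ₀ Δ₀ Γ Δ) : NegShift (insert φ Γ₀) Δ₀ Γ (insert φ.neg Δ) :=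
  insert_left_iff.2 ⟨.inr (Finset.mem_insert_self _ _), h.mono le_rfl (Finset.subset_insert _ _)⟩

theorem insert_right_neg (h : NegShift Γ₀ Δ₀ Γ Δ) : NegShift Γ₀ (insert φ Δ₀) (insert φ.neg Γ) Δ :=
  insert_right_iff.2 ⟨.inr (Finset.mem_insert_self _ _), h.mono (Finset.subset_insert _ _) le_rfl⟩

end NegShift

namespace TCL

open Finset

variable {c : Bool} {Γ Δ Γ' Δ' : PCtx} {φ : PFml} {p : ℕ}

theorem union_left (h : TCL c Γ Δ) (Γ' : PCtx) : TCL c (Γ' ∪ Γ) Δ := by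
  induction Γ' using Finset.induction_on with
  | empty => simpa using h
  | insert φ Γ' _ ih => simpa only [insert_union] using weL _ _ _ φ ih

theorem union_right (h : TCL c Γ Δ) (Δ' : PCtx) : TCL c Γ (Δ' ∪ Δ) := by
  induction Δ' using Finset.induction_on with
  | empty => simpa using h
  | insert φ Δ' _ ih => simpa only [insert_union] using weR _ _ _ φ ih

theorem mono (h : TCL c Γ Δ) (hΓ : Γ ⊆ Γ') (hΔ : Δ ⊆ Δ') : TCL c Γ' Δ' := by
  simpa only [union_eq_left.2 hΓ, union_eq_left.2 hΔ] using (h.union_left Γ').union_right Δ'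

theorem of_insert_left_of_mem (hφ : φ ∈ Γ) (h : TCL c (insert φ Γ) Δ) : TCL c Γ Δ := by
  rwa [insert_eq_of_mem hφ] at h

theorem of_insert_right_of_mem (hφ : φ ∈ Δ) (h : TCL c Γ (insert φ Δ)) : TCL c Γ Δ := by
  rwa [insert_eq_of_mem hφ] at h

theorem initV_of_mem (hΓ : var p ∈ Γ) (hΔ : var p ∈ Δ) : TCL c Γ Δ :=
  (initV c p).mono (singleton_subset_iff.2 hΓ) (singleton_subset_iff.2 hΔ)

theorem initNV_of_mem (hΓ : (var p).neg ∈ Γ) (hΔ : (var p).neg ∈ Δ) : TCL c Γ Δ :=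
  (initNV c p).mono (singleton_subset_iff.2 hΓ) (singleton_subset_iff.2 hΔ)

theorem initL_of_mem (hn : (var p).neg ∈ Γ) (hp : var p ∈ Γ) : TCL c Γ Δ :=
  (initL c p).mono (insert_subset hn (singleton_subset_iff.2 hp)) (empty_subset _)

theorem initR_of_mem (hn : (var p).neg ∈ Δ) (hp : var p ∈ Δ) : TCL c Γ Δ :=
  (initR c p).mono (empty_subset _) (insert_subset hn (singleton_subset_iff.2 hp))

theorem of_negShift_initV (hs : NegShift {var p} {var p} Γ Δ) : TCL c Γ Δ := by
  obtain ⟨h₁ | h₁, h₂ | h₂⟩ : (var p ∈ Γ ∨ (var p).neg ∈ Δ) ∧ (var p ∈ Δ ∨ (var p).neg ∈ Γ) := by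
    simpa [NegShift] using hs
  · exact initV_of_mem h₁ h₂
  · exact initL_of_mem h₂ h₁
  · exact initR_of_mem h₁ h₂
  · exact initNV_of_mem h₂ h₁

theorem of_negShift_initNV (hs : NegShift {(var p).neg} {(var p).neg} Γ Δ) : TCL c Γ Δ := by
  obtain ⟨h₁ | h₁, h₂ | h₂⟩ : ((var p).neg ∈ Γ ∨ (var p).neg.neg ∈ Δ) ∧
      ((var p).neg ∈ Δ ∨ (var p).neg.neg ∈ Γ) := by
    simpa [NegShift] using hs
  · exact initNV_of_mem h₁ h₂
  · exact of_insert_left_of_mem h₂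
      (nnL _ _ _ _ (initL_of_mem (mem_insert_of_mem h₁) (mem_insert_self _ _)))
  · exact of_insert_right_of_mem h₁
      (nnR _ _ _ _ (initR_of_mem (mem_insert_of_mem h₂) (mem_insert_self _ _)))
  · exact of_insert_left_of_mem h₂ (nnL _ _ _ _ (of_insert_right_of_mem h₁
      (nnR _ _ _ _ (initV_of_mem (p := p) (mem_insert_self _ _) (mem_insert_self _ _)))))

theorem of_negShift_initL (hs : NegShift {(var p).neg, var p} ∅ Γ Δ) : TCL c Γ Δ := by
  obtain ⟨h₁ | h₁, h₂ | h₂⟩ : ((var p).neg ∈ Γ ∨ (var p).neg.neg ∈ Δ) ∧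
      (var p ∈ Γ ∨ (var p).neg ∈ Δ) := by
    simpa [NegShift] using hs
  · exact initL_of_mem h₁ h₂
  · exact initNV_of_mem h₁ h₂
  · exact of_insert_right_of_mem h₁ (nnR _ _ _ _ (initV_of_mem h₂ (mem_insert_self _ _)))
  · exact of_insert_right_of_mem h₁
      (nnR _ _ _ _ (initR_of_mem (mem_insert_of_mem h₂) (mem_insert_self _ _)))

theorem of_negShift_initR (hs : NegShift ∅ {(var p).neg, var p} Γ Δ) : TCL c Γ Δ := by
  obtain ⟨h₁ | h₁, h₂ | h₂⟩ : ((var p).neg ∈ Δ ∨ (var p).neg.neg ∈ Γ) ∧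
      (var p ∈ Δ ∨ (var p).neg ∈ Γ) := by
    simpa [NegShift] using hs
  · exact initR_of_mem h₁ h₂
  · exact initNV_of_mem h₂ h₁
  · exact of_insert_left_of_mem h₁ (nnL _ _ _ _ (initV_of_mem (mem_insert_self _ _) h₂))
  · exact of_insert_left_of_mem h₁
      (nnL _ _ _ _ (initL_of_mem (mem_insert_of_mem h₂) (mem_insert_self _ _)))

theorem of_negShift {Γ₀ Δ₀ : PCtx} (h : TCL c Γ₀ Δ₀) (hc : c = false)
    (hs : NegShift Γ₀ Δ₀ Γ Δ) : TCL false Γ Δ := by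
  induction h generalizing Γ Δ with
  | cut => cases hc
  | initV => exact of_negShift_initV hs
  | initNV => exact of_negShift_initNV hs
  | initL => exact of_negShift_initL hs
  | initR => exact of_negShift_initR hs
  | weL _ _ _ _ _ ih => exact ih hc (NegShift.insert_left_iff.1 hs).2
  | weR _ _ _ _ _ ih => exact ih hc (NegShift.insert_right_iff.1 hs).2
  | andL _ _ _ _ _ _ ih =>
    obtain ⟨hφ | hφ, hs⟩ := NegShift.insert_left_iff.1 hs
    · exact of_insert_left_of_mem hφ (andL _ _ _ _ _ (ih hc hs.insert_left.insert_left))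
    · exact of_insert_right_of_mem hφ (nandR _ _ _ _ _ (ih hc hs.insert_left.insert_left))
  | andR _ _ _ _ _ _ _ ih₁ ih₂ =>
    obtain ⟨hφ | hφ, hs⟩ := NegShift.insert_right_iff.1 hs
    · exact of_insert_right_of_mem hφ
        (andR _ _ _ _ _ (ih₁ hc hs.insert_right) (ih₂ hc hs.insert_right))
    · exact of_insert_left_of_mem hφ
        (nandL _ _ _ _ _ (ih₁ hc hs.insert_right) (ih₂ hc hs.insert_right))
  | orL _ _ _ _ _ _ _ ih₁ ih₂ =>
    obtain ⟨hφ | hφ, hs⟩ := NegShift.insert_left_iff.1 hs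
    · exact of_insert_left_of_mem hφ
        (orL _ _ _ _ _ (ih₁ hc hs.insert_left) (ih₂ hc hs.insert_left))
    · exact of_insert_right_of_mem hφ
        (norR _ _ _ _ _ (ih₁ hc hs.insert_left) (ih₂ hc hs.insert_left))
  | orR _ _ _ _ _ _ ih =>
    obtain ⟨hφ | hφ, hs⟩ := NegShift.insert_right_iff.1 hs
    · exact of_insert_right_of_mem hφ (orR _ _ _ _ _ (ih hc hs.insert_right.insert_right))
    · exact of_insert_left_of_mem hφ (norL _ _ _ _ _ (ih hc hs.insert_right.insert_right))
  | impL _ _ _ _ _ _ _ ih₁ ih₂ =>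
    obtain ⟨hφ | hφ, hs⟩ := NegShift.insert_left_iff.1 hs
    · exact of_insert_left_of_mem hφ
        (impL _ _ _ _ _ (ih₁ hc hs.insert_right) (ih₂ hc hs.insert_left))
    · exact of_insert_right_of_mem hφ
        (nimpR _ _ _ _ _ (ih₁ hc hs.insert_right) (ih₂ hc hs.insert_left))
  | impR _ _ _ _ _ _ ih =>
    obtain ⟨hφ | hφ, hs⟩ := NegShift.insert_right_iff.1 hs
    · exact of_insert_right_of_mem hφ (impR _ _ _ _ _ (ih hc hs.insert_right.insert_left))
    · exact of_insert_left_of_mem hφ (nimpL _ _ _ _ _ (ih hc hs.insert_right.insert_left))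
  | nnL _ _ _ _ _ ih =>
    obtain ⟨hφ | hφ, hs⟩ := NegShift.insert_left_iff.1 hs
    · exact of_insert_left_of_mem hφ (nnL _ _ _ _ (ih hc hs.insert_left))
    · exact of_insert_right_of_mem hφ (nnR _ _ _ _ (ih hc hs.insert_left_neg))
  | nnR _ _ _ _ _ ih =>
    obtain ⟨hφ | hφ, hs⟩ := NegShift.insert_right_iff.1 hs
    · exact of_insert_right_of_mem hφ (nnR _ _ _ _ (ih hc hs.insert_right))
    · exact of_insert_left_of_mem hφ (nnL _ _ _ _ (ih hc hs.insert_right_neg))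
  | nandL _ _ _ _ _ _ _ ih₁ ih₂ =>
    obtain ⟨hφ | hφ, hs⟩ := NegShift.insert_left_iff.1 hs
    · exact of_insert_left_of_mem hφ
        (nandL _ _ _ _ _ (ih₁ hc hs.insert_right) (ih₂ hc hs.insert_right))
    · exact of_insert_right_of_mem hφ
        (nnR _ _ _ _ (andR _ _ _ _ _ (ih₁ hc hs.insert_right) (ih₂ hc hs.insert_right)))
  | nandR _ _ _ _ _ _ ih =>
    obtain ⟨hφ | hφ, hs⟩ := NegShift.insert_right_iff.1 hs
    · exact of_insert_right_of_mem hφ (nandR _ _ _ _ _ (ih hc hs.insert_left.insert_left))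
    · exact of_insert_left_of_mem hφ
        (nnL _ _ _ _ (andL _ _ _ _ _ (ih hc hs.insert_left.insert_left)))
  | norL _ _ _ _ _ _ ih =>
    obtain ⟨hφ | hφ, hs⟩ := NegShift.insert_left_iff.1 hs
    · exact of_insert_left_of_mem hφ (norL _ _ _ _ _ (ih hc hs.insert_right.insert_right))
    · exact of_insert_right_of_mem hφ
        (nnR _ _ _ _ (orR _ _ _ _ _ (ih hc hs.insert_right.insert_right)))
  | norR _ _ _ _ _ _ _ ih₁ ih₂ =>
    obtain ⟨hφ | hφ, hs⟩ := NegShift.insert_right_iff.1 hs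
    · exact of_insert_right_of_mem hφ
        (norR _ _ _ _ _ (ih₁ hc hs.insert_left) (ih₂ hc hs.insert_left))
    · exact of_insert_left_of_mem hφ
        (nnL _ _ _ _ (orL _ _ _ _ _ (ih₁ hc hs.insert_left) (ih₂ hc hs.insert_left)))
  | nimpL _ _ _ _ _ _ ih =>
    obtain ⟨hφ | hφ, hs⟩ := NegShift.insert_left_iff.1 hs
    · exact of_insert_left_of_mem hφ (nimpL _ _ _ _ _ (ih hc hs.insert_right.insert_left))
    · exact of_insert_right_of_mem hφ
        (nnR _ _ _ _ (impR _ _ _ _ _ (ih hc hs.insert_right.insert_left)))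
  | nimpR _ _ _ _ _ _ _ ih₁ ih₂ =>
    obtain ⟨hφ | hφ, hs⟩ := NegShift.insert_right_iff.1 hs
    · exact of_insert_right_of_mem hφ
        (nimpR _ _ _ _ _ (ih₁ hc hs.insert_right) (ih₂ hc hs.insert_left))
    · exact of_insert_left_of_mem hφ
        (nnL _ _ _ _ (impL _ _ _ _ _ (ih₁ hc hs.insert_right) (ih₂ hc hs.insert_left)))

end TCL

/-- the rules (¬left) and (¬right) are admissible in cut-free TCL. -/
theorem stmt16 (Γ Δ : PCtx) (α : PFml) :
    (TCL false Γ (insert α Δ) → TCL false (insert α.neg Γ) Δ) ∧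
    (TCL false (insert α Γ) Δ → TCL false Γ (insert α.neg Δ)) :=
  ⟨fun h => h.of_negShift rfl (NegShift.refl Γ Δ).insert_right_neg,
    fun h => h.of_negShift rfl (NegShift.refl Γ Δ).insert_left_neg⟩
end
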